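/- arXiv:math/9805028 — 3 statements merged into one kernel-verified Lean document; each statement's English description precedes it below -/
import Mathlib

section
/- Let Z be a bounded projection (Z² = Z) on a Hilbert space W with Z ≠ 0 and Z ≠ I. Then ‖I − Z‖_W = ‖Z‖_W. Moreover, if Π denotes the W-orthogonal projection onto Ran(Z), then for every u ∈ W, (1/‖Z‖_W)·‖(I − Z)u‖_W ≤ ‖(I − Π)u‖_W ≤ ‖(I − Z)u‖_W. -/
open scoped InnerProductSpace

/-!
Write `b = u - Π u ⊥ Ran Z`. Since `Z Π u = Π u`, we get `u - Z u = b - Z b` with `b ⊥ Z b`,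
so `‖u - Z u‖² = ‖b‖² + ‖Z b‖²`. Testing `Z` on `w = ‖b‖² Z b + ‖Z b‖² b`, which `Z` maps to
`(‖b‖² + ‖Z b‖²) Z b` while `‖w‖² = ‖b‖² ‖Z b‖² (‖b‖² + ‖Z b‖²)`, gives
`‖b‖² + ‖Z b‖² ≤ ‖Z‖² ‖b‖²`, i.e. `‖u - Z u‖ ≤ ‖Z‖ ‖u - Π u‖ ≤ ‖Z‖ ‖u‖`. Hence `‖I - Z‖ ≤ ‖Z‖`,
and the reverse inequality is the same bound for the idempotent `I - Z`.
The remaining inequality `‖u - Π u‖ ≤ ‖u - Z u‖` is the best-approximation property of `Π`.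
-/

theorem IsIdempotentElem.one_le_norm {R : Type*} [NormedRing R] {p : R}
    (hp : IsIdempotentElem p) (h0 : p ≠ 0) : 1 ≤ ‖p‖ := by
  have hpos : 0 < ‖p‖ := norm_pos_iff.2 h0
  have : ‖p‖ ≤ ‖p‖ * ‖p‖ := by simpa only [hp.eq] using norm_mul_le p p
  nlinarith

section
variable {𝕜 E : Type*} [RCLike 𝕜] [NormedAddCommGroup E] [InnerProductSpace 𝕜 E]

theorem Submodule.norm_sub_le_norm_sub_of_sub_mem_orthogonal {K : Submodule 𝕜 E} {u a v : E}
    (ha : a ∈ K) (hua : u - a ∈ Kᗮ) (hv : v ∈ K) : ‖u - a‖ ≤ ‖u - v‖ := by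
  have h := norm_add_sq_eq_norm_sq_add_norm_sq_of_inner_eq_zero (𝕜 := 𝕜) (u - a) (a - v)
    ((K.mem_orthogonal' _).1 hua _ (K.sub_mem ha hv))
  rw [sub_add_sub_cancel] at h
  exact (mul_self_le_mul_self_iff (norm_nonneg _) (norm_nonneg _)).2
    (h ▸ le_add_of_nonneg_right (mul_self_nonneg _))

namespace IsIdempotentElem
variable {Z : E →L[𝕜] E}

theorem norm_sq_add_norm_apply_sq_le (hZ : IsIdempotentElem Z) (hZ0 : Z ≠ 0) {b : E}
    (hb : ⟪Z b, b⟫_𝕜 = 0) : ‖b‖ ^ 2 + ‖Z b‖ ^ 2 ≤ ‖Z‖ ^ 2 * ‖b‖ ^ 2 := by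
  set c := ‖b‖ ^ 2
  set β := ‖Z b‖ ^ 2
  have hZ1 := hZ.one_le_norm hZ0
  rcases (show 0 ≤ β by positivity).eq_or_lt with hβ | hβ
  · have : c ≤ ‖Z‖ ^ 2 * c := le_mul_of_one_le_left (by positivity) (one_le_pow₀ hZ1)
    linarith
  set w : E := (c : 𝕜) • Z b + (β : 𝕜) • b
  have hZw : Z w = ((c + β : ℝ) : 𝕜) • Z b := by
    have : Z (Z b) = Z b := congr($hZ.eq b)
    simp only [w, map_add, map_smul, this, add_smul]
  have hw : ‖w‖ ^ 2 = c * β * (c + β) := by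
    have := norm_add_sq_eq_norm_sq_add_norm_sq_of_inner_eq_zero (𝕜 := 𝕜) ((c : 𝕜) • Z b)
      ((β : 𝕜) • b) (by simp [inner_smul_left, inner_smul_right, hb])
    rw [sq, this, norm_smul, norm_smul, RCLike.norm_ofReal, RCLike.norm_ofReal,
      abs_of_nonneg (by positivity), abs_of_nonneg (by positivity)]
    ring
  have hle : ‖Z w‖ ^ 2 ≤ ‖Z‖ ^ 2 * ‖w‖ ^ 2 := by
    rw [← mul_pow]; exact pow_le_pow_left₀ (norm_nonneg _) (Z.le_opNorm w) 2
  rw [hZw, norm_smul, RCLike.norm_ofReal, abs_of_nonneg (by positivity), hw] at hle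
  have hcβ : 0 < β * (c + β) := by positivity
  nlinarith

theorem norm_sub_apply_le_of_inner_eq_zero (hZ : IsIdempotentElem Z) (hZ0 : Z ≠ 0) {b : E}
    (hb : ⟪Z b, b⟫_𝕜 = 0) : ‖b - Z b‖ ≤ ‖Z‖ * ‖b‖ := by
  have h := norm_add_sq_eq_norm_sq_add_norm_sq_of_inner_eq_zero (𝕜 := 𝕜) b (-Z b)
    (by rw [inner_neg_right, ← inner_conj_symm, hb, map_zero, neg_zero])
  rw [← sub_eq_add_neg, norm_neg] at h
  rw [← pow_le_pow_iff_left₀ (norm_nonneg _) (by positivity) two_ne_zero, mul_pow, sq, h,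
    ← sq, ← sq]
  exact hZ.norm_sq_add_norm_apply_sq_le hZ0 hb

theorem norm_sub_apply_le_of_sub_mem_orthogonal (hZ : IsIdempotentElem Z) (hZ0 : Z ≠ 0)
    {u a : E} (ha : a ∈ LinearMap.range (Z : E →ₗ[𝕜] E))
    (hua : u - a ∈ (LinearMap.range (Z : E →ₗ[𝕜] E))ᗮ) : ‖u - Z u‖ ≤ ‖Z‖ * ‖u - a‖ := by
  have hZa : Z a = a := by
    obtain ⟨x, rfl⟩ := ha
    exact congr($hZ.eq x)
  have key := hZ.norm_sub_apply_le_of_inner_eq_zero hZ0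
    (((LinearMap.range (Z : E →ₗ[𝕜] E)).mem_orthogonal _).1 hua _ ⟨u - a, rfl⟩)
  rwa [map_sub, hZa, sub_sub_sub_cancel_right] at key

theorem norm_one_sub_le [CompleteSpace E] (hZ : IsIdempotentElem Z) (hZ0 : Z ≠ 0) :
    ‖1 - Z‖ ≤ ‖Z‖ := by
  set K := LinearMap.range (Z : E →ₗ[𝕜] E)
  have : CompleteSpace K :=
    (ContinuousLinearMap.IsIdempotentElem.isClosed_range hZ).completeSpace_coe
  refine (1 - Z).opNorm_le_bound (norm_nonneg Z) fun u => ?_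
  have hu := K.sub_starProjection_mem_orthogonal u
  calc ‖(1 - Z) u‖ = ‖u - Z u‖ := rfl
    _ ≤ ‖Z‖ * ‖u - K.starProjection u‖ :=
      hZ.norm_sub_apply_le_of_sub_mem_orthogonal hZ0 (K.starProjection_apply_mem u) hu
    _ ≤ ‖Z‖ * ‖u - 0‖ := by
      gcongr
      exact K.norm_sub_le_norm_sub_of_sub_mem_orthogonal (K.starProjection_apply_mem u) hu
        K.zero_mem
    _ = ‖Z‖ * ‖u‖ := by rw [sub_zero]

theorem norm_one_sub_eq [CompleteSpace E] (hZ : IsIdempotentElem Z) (hZ0 : Z ≠ 0)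
    (hZ1 : Z ≠ 1) : ‖1 - Z‖ = ‖Z‖ := by
  refine le_antisymm (hZ.norm_one_sub_le hZ0) ?_
  simpa using hZ.one_sub.norm_one_sub_le (sub_ne_zero.2 hZ1.symm)

end IsIdempotentElem
end

/-- Lemma `idemp`.  Let `Z` be a bounded projection (`Z ∘ Z = Z`) on a
complex Hilbert space `W`, with `Z ≠ 0` and `Z ≠ I`.  Then `‖I - Z‖ = ‖Z‖`; moreover, if
`Π` is the `W`-orthogonal projection onto `Ran Z` (encoded by: `Π u ∈ Ran Z` and
`u - Π u ⟂ Ran Z` for all `u`), then for every `u ∈ W`,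
`(1/‖Z‖)·‖(I - Z)u‖ ≤ ‖(I - Π)u‖ ≤ ‖(I - Z)u‖`. -/
theorem stmt0 {W : Type*} [NormedAddCommGroup W] [InnerProductSpace ℂ W] [CompleteSpace W]
    (Z : W →L[ℂ] W) (hidem : Z ∘L Z = Z) (hZ0 : Z ≠ 0) (hZ1 : Z ≠ 1)
    (Pi : W →L[ℂ] W)
    (hPi_mem : ∀ u : W, Pi u ∈ LinearMap.range (Z : W →ₗ[ℂ] W))
    (hPi_orth : ∀ u : W, ∀ v ∈ LinearMap.range (Z : W →ₗ[ℂ] W), ⟪u - Pi u, v⟫_ℂ = 0) :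
    ‖(1 : W →L[ℂ] W) - Z‖ = ‖Z‖ ∧
      ∀ u : W,
        (1 / ‖Z‖) * ‖u - Z u‖ ≤ ‖u - Pi u‖ ∧ ‖u - Pi u‖ ≤ ‖u - Z u‖ := by
  have hZ : IsIdempotentElem Z := hidem
  have hPi_orth' (u : W) : u - Pi u ∈ (LinearMap.range (Z : W →ₗ[ℂ] W))ᗮ :=
    (Submodule.mem_orthogonal' _ _).2 (hPi_orth u)
  refine ⟨hZ.norm_one_sub_eq hZ0 hZ1, fun u => ⟨?_, ?_⟩⟩
  · rw [one_div, inv_mul_le_iff₀ (norm_pos_iff.2 hZ0)]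
    exact hZ.norm_sub_apply_le_of_sub_mem_orthogonal hZ0 (hPi_mem u) (hPi_orth' u)
  · exact Submodule.norm_sub_le_norm_sub_of_sub_mem_orthogonal (hPi_mem u) (hPi_orth' u) ⟨u, rfl⟩
end

section
/- Let T* denote the H-adjoint of T. Suppose the V-convergence hypotheses hold and S_{2,h} satisfies both β(h)⁻¹ inf_{w ∈ S_{2,h}} ‖v − w‖_V → 0 as h → 0 for each v ∈ V, and γ(h) := sup{ inf_{w ∈ S_{2,h}} ‖T*v − w‖_V : v ∈ S_{2,h}, ‖v‖_V = 1 } → 0 as h → 0. Then T* maps V into V, ε_V(h) → 0 as h → 0, and ε_V(h) = O(γ(h)). -/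
open scoped InnerProductSpace Topology
open Filter

noncomputable section

/-- The containment gap `δ(M, N) = sup_{x ∈ M} dist(x, N)/‖x‖` between subspaces. -/
noncomputable def subGap {V : Type*} [NormedAddCommGroup V] [InnerProductSpace ℂ V]
    (M N : Submodule ℂ V) : ℝ :=
  ⨆ x : M, Metric.infDist (x : V) (N : Set V) / ‖(x : V)‖

/-- The gap between (the graphs of) two bounded operators. -/
noncomputable def opGap {V : Type*} [NormedAddCommGroup V] [InnerProductSpace ℂ V]
    (A B : V →L[ℂ] V) : ℝ :=
  ⨆ x : V, ⨅ y : V, (‖x - y‖ + ‖A x - B y‖) / (‖x‖ + ‖A x‖)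

/-- The discrete inf–sup constant `β` of `(S₁, S₂)` relative to the sesquilinear form `a`. -/
noncomputable def infSupForm {V : Type*} [NormedAddCommGroup V] [InnerProductSpace ℂ V]
    (a : V →ₗ⋆[ℂ] V →ₗ[ℂ] ℂ) (S1 S2 : Submodule ℂ V) : ℝ :=
  ⨅ u : {u : V // u ∈ S2 ∧ ‖u‖ = 1}, ⨆ v : {v : V // v ∈ S1 ∧ ‖v‖ = 1},
    ‖a (u : V) (v : V)‖

/-- `ε_V = sup_{u ∈ U} ‖P T (I - P) u‖_V / ‖(I - Π₁)u‖_V`; here `‖(I - Π₁)u‖ = dist(u, S₁)`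
since `Π₁` is the `V`-orthogonal projection onto `S₁`. -/
noncomputable def epsV {V : Type*} [NormedAddCommGroup V] [InnerProductSpace ℂ V]
    (T P : V →L[ℂ] V) (U S1 : Submodule ℂ V) : ℝ :=
  ⨆ u : U, ‖P (T ((u : V) - P (u : V)))‖ / Metric.infDist (u : V) (S1 : Set V)

/-- The maximal invariant subspace `⋃_k ker (T - μ)^k` associated with `μ`. -/
noncomputable def maxInv {V : Type*} [NormedAddCommGroup V] [InnerProductSpace ℂ V]
    (T : V →L[ℂ] V) (mu : ℂ) : Submodule ℂ V :=
  ⨆ k : ℕ, LinearMap.ker (((T : V →ₗ[ℂ] V) - mu • LinearMap.id) ^ k)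

/-- `μ` is an isolated point of the spectrum. -/
def IsIsolatedEig {V : Type*} [NormedAddCommGroup V] [InnerProductSpace ℂ V]
    [CompleteSpace V] (T : V →L[ℂ] V) (mu : ℂ) : Prop :=
  mu ∈ spectrum ℂ T ∧ ∃ ε > 0, ∀ z ∈ spectrum ℂ T, z ≠ mu → ε ≤ ‖z - mu‖

/-- The data of the variational (Galerkin) setting of Section 2 of the paper:  a Gelfand
triple `V ↪ H`, a bounded coercive sectorial sesquilinear form `a` on `V = Dom(a)`
(conjugate-linear in the first argument), and the bounded solution operator
`T = A⁻¹ : H → V` characterized by `a(u, Tf) = ⟨u, f⟩_H`. -/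
structure FormSetting (V H : Type*) [NormedAddCommGroup V] [InnerProductSpace ℂ V]
    [CompleteSpace V] [NormedAddCommGroup H] [InnerProductSpace ℂ H] [CompleteSpace H] where
  /-- the continuous dense imbedding `V ↪ H` -/
  incl : V →L[ℂ] H
  incl_inj : Function.Injective incl
  incl_dense : DenseRange incl
  incl_norm : ∀ v : V, ‖incl v‖ ≤ ‖v‖
  /-- the sesquilinear form `a`, conjugate-linear in its first argument -/
  a : V →ₗ⋆[ℂ] V →ₗ[ℂ] ℂ
  /-- `a` is bounded on `V` -/
  bound : ℝ
  bound_pos : 0 < bound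
  a_bounded : ∀ u v : V, ‖a u v‖ ≤ bound * ‖u‖ * ‖v‖
  /-- `a` is sectorial: `Re a(v,v) ≥ α‖v‖_H²` and `|Im a(v,v)| ≤ M(Re a(v,v) - α‖v‖_H²)` -/
  alpha : ℝ
  alpha_pos : 0 < alpha
  sectM : ℝ
  sectM_pos : 0 < sectM
  sect_re : ∀ v : V, alpha * ‖incl v‖ ^ 2 ≤ (a v v).re
  sect_im : ∀ v : V, |(a v v).im| ≤ sectM * ((a v v).re - alpha * ‖incl v‖ ^ 2)
  /-- the `V`-norm is equivalent to the norm induced by `[Re a]` -/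
  equiv_lo : ℝ
  equiv_lo_pos : 0 < equiv_lo
  equiv_hi : ℝ
  equiv_hi_pos : 0 < equiv_hi
  equiv_norm_lo : ∀ v : V, equiv_lo * ‖v‖ ^ 2 ≤ (a v v).re
  equiv_norm_hi : ∀ v : V, (a v v).re ≤ equiv_hi * ‖v‖ ^ 2
  /-- the bounded solution operator `T : H → V`, `a(u, Tf) = ⟨u, f⟩_H` -/
  T : H →L[ℂ] V
  hT : ∀ (u : V) (f : H), a u (T f) = ⟪incl u, f⟫_ℂ

end

/-!
The `H`-adjoint of `T` is the solution operator `S` of the adjoint problem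
`a(S f, u) = ⟨f, u⟩_H`, which exists by Lax–Milgram; so `T*` maps `V` into `V`, where it is
`S ∘ incl`.

For the estimate, let `R_h : V → S_{2,h}` be the adjoint Galerkin projection,
`a(R_h v, x) = a(v, x)` for `x ∈ S_{1,h}`. The inf-sup condition and
`dim S_{1,h} = dim S_{2,h}` make it well defined with `‖R_h‖ ≤ β(h)⁻¹ b` (`b` bounds `a`), so
`R_h` is quasi-optimal; the approximation property of `S_{2,h}` then bounds `R_h v` for each `v`,
and Banach–Steinhaus bounds `‖R_h‖ ≤ M` uniformly. Testing against `R_h` makes `a` coercive on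
`S_{1,h}` with the constant `c` of `a` on `V`, hence `‖P_h‖ ≤ K := b M / c` and
`‖(I - P_h)u‖ ≤ (1 + K) dist(u, S_{1,h})`. Finally, for `x = P_h T e` with `e = (I - P_h)u`,
Galerkin orthogonality on both sides gives `a(R_h x, x) = a(R_h x, T e) = a(T* R_h x - z, e)`
for every `z ∈ S_{2,h}`, so `c ‖x‖² ≤ b γ(h) ‖R_h x‖ ‖e‖ ≤ b M γ(h) ‖x‖ ‖e‖`.
-/
open Metric

section InfDist

theorem le_mul_infDist_of_forall {α : Type*} [PseudoMetricSpace α] {S : Set α}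
    (hS : S.Nonempty) {K d : ℝ} (hK : 0 ≤ K) {p : α} (h : ∀ s ∈ S, d ≤ K * dist p s) :
    d ≤ K * infDist p S := by
  rcases hK.eq_or_lt with rfl | hK
  · obtain ⟨s, hs⟩ := hS
    simpa using h s hs
  rw [← div_le_iff₀' hK, le_infDist hS]
  exact fun s hs => (div_le_iff₀' hK).2 (h s hs)

variable {E G : Type*} [SeminormedAddCommGroup E] [FunLike G E E] [AddMonoidHomClass G E E]

theorem norm_sub_apply_le_mul_infDist (Q : G) {S : Set E} (hS : S.Nonempty) {K : ℝ}
    (hK : 0 ≤ K) (hQS : ∀ s ∈ S, Q s = s) (hQ : ∀ v, ‖Q v‖ ≤ K * ‖v‖) (v : E) :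
    ‖v - Q v‖ ≤ (1 + K) * infDist v S := by
  refine le_mul_infDist_of_forall hS (by positivity) fun s hs => ?_
  have hsplit : v - Q v = (v - s) - Q (v - s) := by rw [map_sub, hQS s hs]; abel
  rw [hsplit, dist_eq_norm]
  linarith [norm_sub_le (v - s) (Q (v - s)), hQ (v - s)]

theorem norm_apply_le_two_mul_add_mul_infDist (Q : G) {S : Set E} (h0 : (0 : E) ∈ S) {K : ℝ}
    (hK : 0 ≤ K) (hQS : ∀ s ∈ S, Q s = s) (hQ : ∀ v, ‖Q v‖ ≤ K * ‖v‖) (v : E) :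
    ‖Q v‖ ≤ 2 * ‖v‖ + K * infDist v S := by
  have hd : infDist v S ≤ ‖v‖ := by simpa using infDist_le_dist_of_mem (x := v) h0
  linarith [norm_sub_apply_le_mul_infDist Q ⟨0, h0⟩ hK hQS hQ v, norm_sub_norm_le (Q v) v,
    norm_sub_rev (Q v) v]

theorem infDist_apply_le_iSup_mul_norm {𝕜 : Type*} [RCLike 𝕜] [NormedSpace 𝕜 E] (L : E →L[𝕜] E)
    (S : Submodule 𝕜 E) {w : E} (hw : w ∈ S) :
    infDist (L w) S ≤ (⨆ v : {v : E // v ∈ S ∧ ‖v‖ = 1}, infDist (L v) S) * ‖w‖ := by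
  rcases eq_or_ne ‖w‖ 0 with hw0 | hw0
  · have h0 : infDist (L w) S ≤ ‖L‖ * ‖w‖ :=
      (infDist_le_dist_of_mem S.zero_mem).trans ((dist_zero_right _).trans_le (L.le_opNorm w))
    simpa [hw0] using h0
  set u : E := (‖w‖⁻¹ : 𝕜) • w
  have hu : u ∈ S ∧ ‖u‖ = 1 := ⟨S.smul_mem _ hw, by simp [u, norm_smul, hw0]⟩
  have hbdd : BddAbove (Set.range fun v : {v : E // v ∈ S ∧ ‖v‖ = 1} => infDist (L v) S) := by
    refine ⟨‖L‖, ?_⟩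
    rintro _ ⟨v, rfl⟩
    calc infDist (L v) S ≤ dist (L v) 0 := infDist_le_dist_of_mem S.zero_mem
      _ ≤ ‖L‖ * ‖(v : E)‖ := by simpa using L.le_opNorm v
      _ = ‖L‖ := by rw [v.2.2, mul_one]
  have hLw : L w = (‖w‖ : 𝕜) • L u := by
    rw [← map_smul]; simp [u, smul_smul, hw0]
  calc infDist (L w) S ≤ ‖w‖ * infDist (L u) S :=
        le_mul_infDist_of_forall ⟨0, S.zero_mem⟩ (norm_nonneg w) fun s hs => by
          calc infDist (L w) S ≤ dist (L w) ((‖w‖ : 𝕜) • s) :=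
                infDist_le_dist_of_mem (S.smul_mem _ hs)
            _ = ‖w‖ * dist (L u) s := by
                rw [hLw, dist_smul₀]; simp
    _ ≤ ‖w‖ * ⨆ v : {v : E // v ∈ S ∧ ‖v‖ = 1}, infDist (L v) S := by
        gcongr; exact le_ciSup hbdd ⟨u, hu⟩
    _ = _ := mul_comm _ _

end InfDist

theorem banach_steinhaus_eventually {𝕜 E F ι : Type*} [NontriviallyNormedField 𝕜]
    [NormedAddCommGroup E] [NormedSpace 𝕜 E] [CompleteSpace E] [NormedAddCommGroup F]
    [NormedSpace 𝕜 F] {l : Filter ι} [l.IsCountablyGenerated] {g : ι → E →L[𝕜] F}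
    (h : ∀ x, ∃ C, ∀ᶠ i in l, ‖g i x‖ ≤ C) : ∃ C', ∀ᶠ i in l, ‖g i‖ ≤ C' := by
  by_contra! hcon
  obtain ⟨s, hs⟩ := l.exists_antitone_basis
  have hseq : ∀ n : ℕ, ∃ i ∈ s n, (n : ℝ) < ‖g i‖ := fun n =>
    ((hcon n).and_eventually (hs.mem n)).exists.imp fun i hi => ⟨hi.2, hi.1⟩
  choose i hi_mem hi_big using hseq
  have hi : Tendsto i atTop l := hs.tendsto hi_mem
  obtain ⟨C', hC'⟩ := banach_steinhaus (g := fun n => g (i n)) fun x => by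
    obtain ⟨C, hC⟩ := h x
    obtain ⟨D, hD⟩ := IsBoundedUnder.bddAbove_range (f := fun n => ‖g (i n) x‖)
      ⟨C, hi.eventually hC⟩
    exact ⟨D, fun n => hD ⟨n, rfl⟩⟩
  linarith [hi_big ⌈C'⌉₊, hC' ⌈C'⌉₊, Nat.le_ceil C']

theorem exists_eventually_opNorm_le_of_tendsto_infDist {𝕜 E ι : Type*}
    [NontriviallyNormedField 𝕜] [NormedAddCommGroup E] [NormedSpace 𝕜 E] [CompleteSpace E]
    {l : Filter ι} [l.IsCountablyGenerated] {R : ι → E →L[𝕜] E} {S : ι → Submodule 𝕜 E}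
    {β : ι → ℝ} {b : ℝ} (hb0 : 0 ≤ b)
    (hR : ∀ᶠ i in l, 0 ≤ β i ∧ (∀ w ∈ S i, R i w = w) ∧ ‖R i‖ ≤ (β i)⁻¹ * b)
    (happrox : ∀ v, Tendsto (fun i => (β i)⁻¹ * infDist v (S i : Set E)) l (𝓝 0)) :
    ∃ M, ∀ᶠ i in l, ‖R i‖ ≤ M :=
  banach_steinhaus_eventually fun v => ⟨2 * ‖v‖ + b, by
    filter_upwards [hR, (happrox v).eventually (ge_mem_nhds one_pos)]
      with i ⟨hβ, hfix, hnorm⟩ happ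
    have := norm_apply_le_two_mul_add_mul_infDist (R i) (S i).zero_mem
      (mul_nonneg (inv_nonneg.2 hβ) hb0) hfix ((R i).le_of_opNorm_le hnorm) v
    linarith [mul_le_mul_of_nonneg_left happ hb0]⟩

section Form

variable {V : Type*} [NormedAddCommGroup V] [InnerProductSpace ℂ V]
  {a : V →ₗ⋆[ℂ] V →ₗ[ℂ] ℂ} {b c : ℝ}

theorem norm_form_le_mul_infDist (hb : ∀ u v, ‖a u v‖ ≤ b * ‖u‖ * ‖v‖) (hb0 : 0 ≤ b)
    {S : Submodule ℂ V} {e : V} (he : ∀ z ∈ S, a z e = 0) (p : V) :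
    ‖a p e‖ ≤ b * infDist p S * ‖e‖ := by
  have h := le_mul_infDist_of_forall (p := p) (d := ‖a p e‖) ⟨0, S.zero_mem⟩
    (mul_nonneg hb0 (norm_nonneg e)) fun z hz => by
      have hpz : a p e = a (p - z) e := by rw [map_sub, LinearMap.sub_apply, he z hz, sub_zero]
      rw [hpz, dist_eq_norm]
      linarith [hb (p - z) e]
  linarith

theorem mul_norm_le_of_le_infSupForm {S1 S2 : Submodule ℂ V} {β N : ℝ}
    (hβ : β ≤ infSupForm a S1 S2) {u : V} (hu : u ∈ S2) (hN : 0 ≤ N)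
    (hau : ∀ x ∈ S1, ‖a u x‖ ≤ N * ‖x‖) : β * ‖u‖ ≤ N := by
  rcases eq_or_ne u 0 with rfl | hu0
  · simpa using hN
  have hr : 0 < ‖u‖ := norm_pos_iff.2 hu0
  let u₁ : {u : V // u ∈ S2 ∧ ‖u‖ = 1} :=
    ⟨((‖u‖⁻¹ : ℝ) : ℂ) • u, S2.smul_mem _ hu, by simp [norm_smul, hu0]⟩
  have hbdd : BddBelow (Set.range fun u : {u : V // u ∈ S2 ∧ ‖u‖ = 1} =>
      ⨆ v : {v : V // v ∈ S1 ∧ ‖v‖ = 1}, ‖a (u : V) (v : V)‖) :=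
    ⟨0, by rintro _ ⟨_, rfl⟩; exact Real.iSup_nonneg fun _ => norm_nonneg _⟩
  have hsup : (⨆ v : {v : V // v ∈ S1 ∧ ‖v‖ = 1}, ‖a (u₁ : V) (v : V)‖) ≤ ‖u‖⁻¹ * N := by
    refine Real.iSup_le (fun v => ?_) (by positivity)
    calc ‖a (u₁ : V) (v : V)‖ = ‖u‖⁻¹ * ‖a u (v : V)‖ := by simp [u₁]
      _ ≤ ‖u‖⁻¹ * (N * ‖(v : V)‖) := by gcongr; exact hau _ v.2.1
      _ = ‖u‖⁻¹ * N := by rw [v.2.2, mul_one]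
  rw [mul_comm, ← le_inv_mul_iff₀ hr]
  exact (hβ.trans (ciInf_le hbdd u₁)).trans hsup

variable (a) in
structure IsGalerkinProjection (S1 S2 : Submodule ℂ V) (P : V → V) : Prop where
  mem : ∀ v, P v ∈ S1
  form_sub_eq_zero : ∀ u ∈ S2, ∀ v, a u (v - P v) = 0

variable (a) in
structure IsAdjointGalerkinProjection (S1 S2 : Submodule ℂ V) (R : V → V) : Prop where
  mem : ∀ v, R v ∈ S2
  form_eq : ∀ v, ∀ x ∈ S1, a (R v) x = a v x

variable {S1 S2 : Submodule ℂ V}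

theorem IsGalerkinProjection.form_apply_eq {P : V → V} (hP : IsGalerkinProjection a S1 S2 P)
    {u : V} (hu : u ∈ S2) (v : V) : a u (P v) = a u v := by
  have h := hP.form_sub_eq_zero u hu v
  rwa [map_sub, sub_eq_zero, eq_comm] at h

theorem IsAdjointGalerkinProjection.mul_norm_le {R : V → V}
    (hR : IsAdjointGalerkinProjection a S1 S2 R) (hc : ∀ v, c * ‖v‖ ^ 2 ≤ (a v v).re)
    {x : V} (hx : x ∈ S1) {N : ℝ} (hN : 0 ≤ N) (h : ‖a (R x) x‖ ≤ N * ‖x‖) : c * ‖x‖ ≤ N := by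
  have hsq : c * ‖x‖ * ‖x‖ ≤ N * ‖x‖ :=
    calc c * ‖x‖ * ‖x‖ = c * ‖x‖ ^ 2 := by ring
      _ ≤ (a (R x) x).re := by rw [hR.form_eq x x hx]; exact hc x
      _ ≤ N * ‖x‖ := (Complex.re_le_norm _).trans h
  rcases (norm_nonneg x).eq_or_lt with hx0 | hx0
  · rw [← hx0, mul_zero]; exact hN
  · exact le_of_mul_le_mul_right hsq hx0

variable {R : V →L[ℂ] V} {M : ℝ}

theorem IsGalerkinProjection.apply_eq_self {P : V → V} (hP : IsGalerkinProjection a S1 S2 P)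
    (hR : IsAdjointGalerkinProjection a S1 S2 R) (hc : ∀ v, c * ‖v‖ ^ 2 ≤ (a v v).re)
    (hc0 : 0 < c) {v : V} (hv : v ∈ S1) : P v = v := by
  have h := hR.mul_norm_le hc (sub_mem hv (hP.mem v)) le_rfl
    (by rw [hP.form_sub_eq_zero _ (hR.mem _) v]; simp)
  have h0 : ‖v - P v‖ = 0 := le_antisymm (by nlinarith [norm_nonneg (v - P v)]) (norm_nonneg _)
  exact (sub_eq_zero.1 (norm_eq_zero.1 h0)).symm

theorem IsGalerkinProjection.norm_apply_le {P : V → V} (hP : IsGalerkinProjection a S1 S2 P)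
    (hR : IsAdjointGalerkinProjection a S1 S2 R) (hRM : ‖R‖ ≤ M)
    (hb : ∀ u v, ‖a u v‖ ≤ b * ‖u‖ * ‖v‖) (hb0 : 0 ≤ b) (hc : ∀ v, c * ‖v‖ ^ 2 ≤ (a v v).re)
    (hc0 : 0 < c) (v : V) : ‖P v‖ ≤ b * M / c * ‖v‖ := by
  have hM : 0 ≤ M := (norm_nonneg R).trans hRM
  have h := hR.mul_norm_le hc (hP.mem v) (N := b * M * ‖v‖) (by positivity) <| by
    rw [hP.form_apply_eq (hR.mem _)]
    calc ‖a (R (P v)) v‖ ≤ b * ‖R (P v)‖ * ‖v‖ := hb _ _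
      _ ≤ b * (M * ‖P v‖) * ‖v‖ := by gcongr; exact R.le_of_opNorm_le hRM _
      _ = b * M * ‖v‖ * ‖P v‖ := by ring
  rw [div_mul_eq_mul_div, le_div_iff₀ hc0]
  linarith

theorem IsGalerkinProjection.mul_norm_apply_le {P : V → V}
    (hP : IsGalerkinProjection a S1 S2 P) (hR : IsAdjointGalerkinProjection a S1 S2 R)
    (hRM : ‖R‖ ≤ M) (hb : ∀ u v, ‖a u v‖ ≤ b * ‖u‖ * ‖v‖) (hb0 : 0 ≤ b)
    (hc : ∀ v, c * ‖v‖ ^ 2 ≤ (a v v).re) {A L : V →L[ℂ] V}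
    (hAL : ∀ w e, a w (A e) = a (L w) e) {e : V} (he : ∀ z ∈ S2, a z e = 0) :
    c * ‖P (A e)‖ ≤ b * M * (⨆ v : {v : V // v ∈ S2 ∧ ‖v‖ = 1}, infDist (L v) S2) * ‖e‖ := by
  set γ := ⨆ v : {v : V // v ∈ S2 ∧ ‖v‖ = 1}, infDist (L v) S2
  have hγ : 0 ≤ γ := Real.iSup_nonneg fun _ => infDist_nonneg
  have hM : 0 ≤ M := (norm_nonneg R).trans hRM
  set x := P (A e)
  refine hR.mul_norm_le hc (hP.mem _) (by positivity) ?_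
  calc ‖a (R x) x‖ = ‖a (L (R x)) e‖ := by rw [hP.form_apply_eq (hR.mem x), hAL]
    _ ≤ b * infDist (L (R x)) S2 * ‖e‖ := norm_form_le_mul_infDist hb hb0 he _
    _ ≤ b * (γ * ‖R x‖) * ‖e‖ := by gcongr; exact infDist_apply_le_iSup_mul_norm L S2 (hR.mem x)
    _ ≤ b * (γ * (M * ‖x‖)) * ‖e‖ := by gcongr; exact R.le_of_opNorm_le hRM x
    _ = b * M * γ * ‖e‖ * ‖x‖ := by ring

theorem epsV_nonneg (T P : V →L[ℂ] V) (U S : Submodule ℂ V) : 0 ≤ epsV T P U S :=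
  Real.iSup_nonneg fun _ => div_nonneg (norm_nonneg _) infDist_nonneg

theorem IsGalerkinProjection.epsV_le {P : V →L[ℂ] V} (hP : IsGalerkinProjection a S1 S2 P)
    (hR : IsAdjointGalerkinProjection a S1 S2 R) (hRM : ‖R‖ ≤ M)
    (hb : ∀ u v, ‖a u v‖ ≤ b * ‖u‖ * ‖v‖) (hb0 : 0 ≤ b) (hc : ∀ v, c * ‖v‖ ^ 2 ≤ (a v v).re)
    (hc0 : 0 < c) {A L : V →L[ℂ] V} (hAL : ∀ w e, a w (A e) = a (L w) e) (U : Submodule ℂ V) :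
    epsV A P U S1 ≤ b * M / c * (1 + b * M / c) *
      ⨆ v : {v : V // v ∈ S2 ∧ ‖v‖ = 1}, infDist (L v) S2 := by
  set K := b * M / c
  set γ := ⨆ v : {v : V // v ∈ S2 ∧ ‖v‖ = 1}, infDist (L v) S2
  have hγ : 0 ≤ γ := Real.iSup_nonneg fun _ => infDist_nonneg
  have hK : 0 ≤ K := div_nonneg (mul_nonneg hb0 ((norm_nonneg R).trans hRM)) hc0.le
  refine Real.iSup_le (fun u => div_le_of_le_mul₀ infDist_nonneg (by positivity) ?_)
    (by positivity)
  have he := norm_sub_apply_le_mul_infDist P ⟨0, S1.zero_mem⟩ hK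
    (fun s hs => hP.apply_eq_self hR hc hc0 hs) (hP.norm_apply_le hR hRM hb hb0 hc hc0) u
  have hx := hP.mul_norm_apply_le hR hRM hb hb0 hc hAL fun z hz => hP.form_sub_eq_zero z hz u
  calc ‖P (A (u - P u))‖ ≤ K * γ * ‖(u : V) - P u‖ := by
        rw [mul_assoc, div_mul_eq_mul_div, le_div_iff₀ hc0]; linarith
    _ ≤ K * γ * ((1 + K) * infDist (u : V) S1) := by gcongr
    _ = K * (1 + K) * γ * infDist (u : V) S1 := by ring

end Form

section Existence

variable {V : Type*} [NormedAddCommGroup V] [InnerProductSpace ℂ V]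
  {a : V →ₗ⋆[ℂ] V →ₗ[ℂ] ℂ} {b c : ℝ}

theorem exists_inner_eq_form [CompleteSpace V] (hb : ∀ u v, ‖a u v‖ ≤ b * ‖u‖ * ‖v‖) :
    ∃ Z : V →L[ℂ] V, ∀ u v, a u v = ⟪Z u, v⟫_ℂ :=
  ⟨InnerProductSpace.continuousLinearMapOfBilin (a.mkContinuous₂ b hb), fun u v => by
    rw [InnerProductSpace.continuousLinearMapOfBilin_apply]; rfl⟩

theorem exists_isAdjointGalerkinProjection_linear [CompleteSpace V]
    (hb : ∀ u v, ‖a u v‖ ≤ b * ‖u‖ * ‖v‖)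
    {S1 S2 : Submodule ℂ V} [FiniteDimensional ℂ S1]
    (hdim : Module.finrank ℂ S1 = Module.finrank ℂ S2) {β : ℝ} (hβ0 : 0 < β)
    (hβ : β ≤ infSupForm a S1 S2) :
    ∃ R : V →ₗ[ℂ] V, IsAdjointGalerkinProjection a S1 S2 R := by
  obtain ⟨Z, hZ⟩ := exists_inner_eq_form hb
  set g : V →L[ℂ] S1 := S1.orthogonalProjectionOnto ∘L Z
  have hg : ∀ v, ∀ x ∈ S1, ⟪(g v : V), x⟫_ℂ = a v x := fun v x hx => by
    have h0 := S1.starProjection_inner_eq_zero (Z v) x hx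
    rw [inner_sub_left, sub_eq_zero] at h0
    exact h0.symm.trans (hZ v x).symm
  set y : S2 →ₗ[ℂ] S1 := (g : V →ₗ[ℂ] S1) ∘ₗ S2.subtype
  have hy : Function.Injective y := by
    rw [injective_iff_map_eq_zero]
    intro u hu
    have hgu : g u = 0 := hu
    have h := mul_norm_le_of_le_infSupForm hβ u.2 le_rfl fun x hx => by
      rw [← hg u x hx, hgu]
      simp
    have : ‖(u : V)‖ = 0 := le_antisymm (by nlinarith [norm_nonneg (u : V)]) (norm_nonneg _)
    simpa using this
  have : FiniteDimensional ℂ S2 := Module.Finite.of_injective y hy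
  let e := y.linearEquivOfInjective hy hdim.symm
  refine ⟨S2.subtype ∘ₗ e.symm.toLinearMap ∘ₗ (g : V →ₗ[ℂ] S1),
    ⟨fun v => (e.symm _).2, fun v x hx => ?_⟩⟩
  rw [← hg _ x hx, ← hg v x hx]
  congr 2
  exact e.apply_symm_apply (g v)

theorem exists_isAdjointGalerkinProjection [CompleteSpace V]
    (hb : ∀ u v, ‖a u v‖ ≤ b * ‖u‖ * ‖v‖) (hb0 : 0 ≤ b)
    {S1 S2 : Submodule ℂ V} [FiniteDimensional ℂ S1]
    (hdim : Module.finrank ℂ S1 = Module.finrank ℂ S2) {β : ℝ} (hβ0 : 0 < β)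
    (hβ : β ≤ infSupForm a S1 S2) :
    ∃ R : V →L[ℂ] V, IsAdjointGalerkinProjection a S1 S2 R ∧ (∀ w ∈ S2, R w = w) ∧
      ‖R‖ ≤ β⁻¹ * b := by
  obtain ⟨R, hR⟩ := exists_isAdjointGalerkinProjection_linear hb hdim hβ0 hβ
  have hRb : ∀ v, ‖R v‖ ≤ β⁻¹ * b * ‖v‖ := fun v => by
    rw [mul_assoc, le_inv_mul_iff₀ hβ0]
    exact mul_norm_le_of_le_infSupForm hβ (hR.mem v) (by positivity) fun x hx => by
      rw [hR.form_eq v x hx]; exact hb v x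
  refine ⟨R.mkContinuous _ hRb, hR, fun w hw => ?_,
    LinearMap.mkContinuous_norm_le _ (by positivity) _⟩
  have h := mul_norm_le_of_le_infSupForm hβ (sub_mem (hR.mem w) hw) le_rfl fun x hx => by
    simp [hR.form_eq w x hx]
  have : ‖R w - w‖ = 0 := le_antisymm (by nlinarith [norm_nonneg (R w - w)]) (norm_nonneg _)
  exact sub_eq_zero.1 (norm_eq_zero.1 this)

theorem antilipschitz_of_coercive (Z : V →L[ℂ] V) (hc0 : 0 < c)
    (hZ : ∀ v, c * ‖v‖ ^ 2 ≤ (⟪Z v, v⟫_ℂ).re) :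
    AntilipschitzWith ⟨c⁻¹, (inv_pos.2 hc0).le⟩ Z := by
  refine Z.antilipschitz_of_bound fun v => ?_
  show ‖v‖ ≤ c⁻¹ * ‖Z v‖
  rcases (norm_nonneg v).eq_or_lt with hv | hv
  · rw [← hv]; positivity
  have h : c * ‖v‖ * ‖v‖ ≤ ‖Z v‖ * ‖v‖ :=
    calc c * ‖v‖ * ‖v‖ = c * ‖v‖ ^ 2 := by ring
      _ ≤ ‖⟪Z v, v⟫_ℂ‖ := (hZ v).trans (Complex.re_le_norm _)
      _ ≤ ‖Z v‖ * ‖v‖ := norm_inner_le_norm _ _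
  rw [le_inv_mul_iff₀ hc0]
  exact le_of_mul_le_mul_right h hv

theorem range_eq_top_of_coercive [CompleteSpace V] (Z : V →L[ℂ] V) (hc0 : 0 < c)
    (hZ : ∀ v, c * ‖v‖ ^ 2 ≤ (⟪Z v, v⟫_ℂ).re) : Z.range = ⊤ := by
  have hclosed : IsClosed (Z.range : Set V) :=
    (antilipschitz_of_coercive Z hc0 hZ).isClosed_range Z.uniformContinuous
  have : CompleteSpace Z.range := hclosed.completeSpace_coe
  rw [← Submodule.orthogonal_eq_bot_iff, Submodule.eq_bot_iff]
  intro v hv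
  have h := hZ v
  rw [(Submodule.mem_orthogonal _ v).1 hv (Z v) ⟨v, rfl⟩, Complex.zero_re] at h
  by_contra hv0
  linarith [mul_pos hc0 (pow_pos (norm_pos_iff.2 hv0) 2)]

theorem exists_adjointSolution [CompleteSpace V] {H : Type*} [NormedAddCommGroup H]
    [InnerProductSpace ℂ H] [CompleteSpace H] (hb : ∀ u v, ‖a u v‖ ≤ b * ‖u‖ * ‖v‖) (hc0 : 0 < c)
    (hc : ∀ v, c * ‖v‖ ^ 2 ≤ (a v v).re) (J : V →L[ℂ] H) :
    ∃ S : H →L[ℂ] V, ∀ f u, a (S f) u = ⟪f, J u⟫_ℂ := by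
  obtain ⟨Z, hZ⟩ := exists_inner_eq_form hb
  have hZc : ∀ v, c * ‖v‖ ^ 2 ≤ (⟪Z v, v⟫_ℂ).re := fun v => hZ v v ▸ hc v
  let Zeq := ContinuousLinearEquiv.ofBijective Z
    (LinearMap.ker_eq_bot.2 (antilipschitz_of_coercive Z hc0 hZc).injective)
    (range_eq_top_of_coercive Z hc0 hZc)
  refine ⟨Zeq.symm.toContinuousLinearMap ∘L ContinuousLinearMap.adjoint J, fun f u => ?_⟩
  have hZZ : Z (Zeq.symm (ContinuousLinearMap.adjoint J f)) = ContinuousLinearMap.adjoint J f :=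
    Zeq.apply_symm_apply _
  simp only [ContinuousLinearMap.comp_apply, ContinuousLinearEquiv.coe_coe, hZ, hZZ,
    ContinuousLinearMap.adjoint_inner_left]

end Existence

namespace FormSetting

variable {V H : Type*} [NormedAddCommGroup V] [InnerProductSpace ℂ V] [CompleteSpace V]
  [NormedAddCommGroup H] [InnerProductSpace ℂ H] [CompleteSpace H] (F : FormSetting V H)

theorem exists_adjointSolution : ∃ S : H →L[ℂ] V, ∀ f u, F.a (S f) u = ⟪f, F.incl u⟫_ℂ :=
  _root_.exists_adjointSolution F.a_bounded F.equiv_lo_pos F.equiv_norm_lo F.incl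

variable {F} {S : H →L[ℂ] V}

theorem incl_adjointSolution_apply (hS : ∀ f u, F.a (S f) u = ⟪f, F.incl u⟫_ℂ) (f : H) :
    F.incl (S f) = ContinuousLinearMap.adjoint (F.incl ∘L F.T) f :=
  ext_inner_right ℂ fun y => by
    rw [ContinuousLinearMap.adjoint_inner_left, ← F.hT, hS, ContinuousLinearMap.comp_apply]

theorem form_solution_eq_form_adjointSolution (hS : ∀ f u, F.a (S f) u = ⟪f, F.incl u⟫_ℂ)
    (w e : V) :
    F.a w ((F.T ∘L F.incl) e) = F.a ((S ∘L F.incl) w) e := by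
  simp only [ContinuousLinearMap.comp_apply, F.hT, hS]

end FormSetting

theorem stmt7_general {V H : Type*} [NormedAddCommGroup V] [InnerProductSpace ℂ V] [CompleteSpace V]
    [NormedAddCommGroup H] [InnerProductSpace ℂ H] [CompleteSpace H]
    (F : FormSetting V H)
    (U : Submodule ℂ V)
    (S1 S2 : ℝ → Submodule ℂ V)
    (hfin1 : ∀ h : ℝ, 0 < h → FiniteDimensional ℂ (S1 h))
    (hdim : ∀ h : ℝ, 0 < h → Module.finrank ℂ (S1 h) = Module.finrank ℂ (S2 h))
    (beta : ℝ → ℝ) (hbeta : ∀ h : ℝ, 0 < h → beta h = infSupForm F.a (S1 h) (S2 h))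
    (hbeta_pos : ∀ h : ℝ, 0 < h → 0 < beta h)
    (P : ℝ → V →L[ℂ] V)
    (hPrange : ∀ h : ℝ, 0 < h → ∀ v : V, P h v ∈ S1 h)
    (hPorth : ∀ h : ℝ, 0 < h → ∀ u ∈ S2 h, ∀ v : V, F.a u (v - P h v) = 0)
    -- the approximation property for `S_{2,h}`
    (happrox : ∀ v : V,
      Tendsto (fun h => (beta h)⁻¹ * Metric.infDist v ((S2 h : Set V))) (𝓝[>] 0) (𝓝 0))
    -- `T*`, the `H`-adjoint of `T` (as an operator in `H`)
    (Tad : H →L[ℂ] H) (hTad : Tad = ContinuousLinearMap.adjoint (F.incl ∘L F.T)) :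
    -- `T*` maps `V` into `V`, and if `γ(h) → 0` then `ε_V(h) → 0` with `ε_V(h) = O(γ(h))`
    (∀ v : V, Tad (F.incl v) ∈ Set.range F.incl) ∧
    ∀ TsV : V → V, (∀ v : V, F.incl (TsV v) = Tad (F.incl v)) →
      ∀ gam : ℝ → ℝ,
        (∀ h : ℝ, 0 < h →
          gam h = ⨆ v : {v : V // v ∈ S2 h ∧ ‖v‖ = 1},
            Metric.infDist (TsV (v : V)) ((S2 h : Set V))) →
        Tendsto gam (𝓝[>] (0 : ℝ)) (𝓝 0) →
        (Tendsto (fun h => epsV (F.T ∘L F.incl) (P h) U (S1 h)) (𝓝[>] (0 : ℝ)) (𝓝 0) ∧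
         ∃ C > (0 : ℝ), ∀ᶠ h in 𝓝[>] (0 : ℝ),
            epsV (F.T ∘L F.incl) (P h) U (S1 h) ≤ C * gam h) := by
  obtain ⟨S, hS⟩ := F.exists_adjointSolution
  have hSTad : ∀ f, F.incl (S f) = Tad f := hTad ▸ FormSetting.incl_adjointSolution_apply hS
  refine ⟨fun v => ⟨S (F.incl v), hSTad _⟩, fun TsV hTsV gam hgam hgam0 => ?_⟩
  have hTsV_eq : TsV = S ∘L F.incl :=
    funext fun v => F.incl_inj ((hTsV v).trans (hSTad _).symm)
  have hR : ∀ h, ∃ R : V →L[ℂ] V, 0 < h → IsAdjointGalerkinProjection F.a (S1 h) (S2 h) R ∧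
      (∀ w ∈ S2 h, R w = w) ∧ ‖R‖ ≤ (beta h)⁻¹ * F.bound := fun h => by
    by_cases hh : 0 < h
    · have := hfin1 h hh
      obtain ⟨R, hR⟩ := exists_isAdjointGalerkinProjection F.a_bounded F.bound_pos.le
        (hdim h hh) (hbeta_pos h hh) (hbeta h hh).le
      exact ⟨R, fun _ => hR⟩
    · exact ⟨0, fun h' => absurd h' hh⟩
  choose R hR using hR
  obtain ⟨M, hM⟩ := exists_eventually_opNorm_le_of_tendsto_infDist (l := 𝓝[>] 0) F.bound_pos.le
    (eventually_mem_nhdsWithin.mono fun h hh => ⟨(hbeta_pos h hh).le, (hR h hh).2⟩) happrox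
  set K := F.bound * max M 1 / F.equiv_lo
  have hK : 0 < K := div_pos (mul_pos F.bound_pos (lt_max_of_lt_right one_pos)) F.equiv_lo_pos
  have key : ∀ᶠ h in 𝓝[>] 0, epsV (F.T ∘L F.incl) (P h) U (S1 h) ≤ K * (1 + K) * gam h := by
    filter_upwards [hM, self_mem_nhdsWithin] with h hMh hh
    rw [hgam h hh, hTsV_eq]
    exact IsGalerkinProjection.epsV_le ⟨hPrange h hh, hPorth h hh⟩ (hR h hh).1
      (hMh.trans (le_max_left M 1)) F.a_bounded F.bound_pos.le F.equiv_norm_lo F.equiv_lo_pos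
      (FormSetting.form_solution_eq_form_adjointSolution hS) U
  exact ⟨squeeze_zero' (Eventually.of_forall fun h => epsV_nonneg _ _ _ _) key
    (by simpa using hgam0.const_mul (K * (1 + K))), K * (1 + K), by positivity, key⟩

/-- Lemma `Tgen`: let `T*` be the `H`-adjoint of `T`.  Under the
`V`-convergence hypotheses, if `S_{2,h}` satisfies the approximation property
`β(h)⁻¹ inf_{w ∈ S_{2,h}} ‖v - w‖_V → 0` for each `v ∈ V`, then `T*` maps `V` into `V`,
and whenever `γ(h) := sup_{v ∈ S_{2,h}, ‖v‖_V = 1} inf_{w ∈ S_{2,h}} ‖T*v - w‖_V → 0`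
one has `ε_V(h) → 0` and `ε_V(h) = O(γ(h))`. -/
theorem stmt7 {V H : Type*} [NormedAddCommGroup V] [InnerProductSpace ℂ V] [CompleteSpace V]
    [NormedAddCommGroup H] [InnerProductSpace ℂ H] [CompleteSpace H]
    (F : FormSetting V H)
    (lam : ℂ) (hlam0 : lam ≠ 0) (hiso : IsIsolatedEig (F.T ∘L F.incl) lam⁻¹)
    (m : ℕ) (hm : 0 < m) (U : Submodule ℂ V) (hU : U = maxInv (F.T ∘L F.incl) lam⁻¹)
    (hUdim : Module.finrank ℂ U = m)
    (S1 S2 : ℝ → Submodule ℂ V)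
    (hfin1 : ∀ h : ℝ, 0 < h → FiniteDimensional ℂ (S1 h))
    (hfin2 : ∀ h : ℝ, 0 < h → FiniteDimensional ℂ (S2 h))
    (hdim : ∀ h : ℝ, 0 < h → Module.finrank ℂ (S1 h) = Module.finrank ℂ (S2 h))
    (beta : ℝ → ℝ) (hbeta : ∀ h : ℝ, 0 < h → beta h = infSupForm F.a (S1 h) (S2 h))
    (hbeta_pos : ∀ h : ℝ, 0 < h → 0 < beta h)
    (P : ℝ → V →L[ℂ] V)
    (hPrange : ∀ h : ℝ, 0 < h → ∀ v : V, P h v ∈ S1 h)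
    (hPorth : ∀ h : ℝ, 0 < h → ∀ u ∈ S2 h, ∀ v : V, F.a u (v - P h v) = 0)
    (Th : ℝ → V →L[ℂ] V)
    (hTh : ∀ h : ℝ, 0 < h → Th h = (P h) ∘L (F.T ∘L F.incl) ∘L (P h))
    -- the `V`-convergence hypotheses
    (hconv1 : ∀ v : V,
      Tendsto (fun h => (beta h)⁻¹ * Metric.infDist v ((S1 h : Set V))) (𝓝[>] 0) (𝓝 0))
    (hconv2 : Tendsto (fun h => opGap (Th h) (F.T ∘L F.incl)) (𝓝[>] 0) (𝓝 0))
    -- the approximation property for `S_{2,h}`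
    (happrox : ∀ v : V,
      Tendsto (fun h => (beta h)⁻¹ * Metric.infDist v ((S2 h : Set V))) (𝓝[>] 0) (𝓝 0))
    -- `T*`, the `H`-adjoint of `T` (as an operator in `H`)
    (Tad : H →L[ℂ] H) (hTad : Tad = ContinuousLinearMap.adjoint (F.incl ∘L F.T)) :
    -- `T*` maps `V` into `V`, and if `γ(h) → 0` then `ε_V(h) → 0` with `ε_V(h) = O(γ(h))`
    (∀ v : V, Tad (F.incl v) ∈ Set.range F.incl) ∧
    ∀ TsV : V → V, (∀ v : V, F.incl (TsV v) = Tad (F.incl v)) →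
      ∀ gam : ℝ → ℝ,
        (∀ h : ℝ, 0 < h →
          gam h = ⨆ v : {v : V // v ∈ S2 h ∧ ‖v‖ = 1},
            Metric.infDist (TsV (v : V)) ((S2 h : Set V))) →
        Tendsto gam (𝓝[>] (0 : ℝ)) (𝓝 0) →
        (Tendsto (fun h => epsV (F.T ∘L F.incl) (P h) U (S1 h)) (𝓝[>] (0 : ℝ)) (𝓝 0) ∧
         ∃ C > (0 : ℝ), ∀ᶠ h in 𝓝[>] (0 : ℝ),
            epsV (F.T ∘L F.incl) (P h) U (S1 h) ≤ C * gam h) :=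
  stmt7_general F U S1 S2 hfin1 hdim beta hbeta hbeta_pos P hPrange hPorth happrox Tad hTad
end

section
/- Suppose σ(L₁) and σ(L₂) are disjoint. Then for every bounded linear M : W₂ → W₁ the Sylvester operator equation L₁S − SL₂ = M has a unique solution S that is a bounded linear transformation from W₂ into Dom(L₁) ⊂ W₁; moreover S has the representation S = (1/(2πi)) ∮_{Γ₂} (L₁ − z)⁻¹ M (z − L₂)⁻¹ dz, where Γ₂ consists of finitely many closed rectifiable Jordan curves enclosing all points of σ(L₂) and no points of σ(L₁). -/
open scoped InnerProductSpace Topology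
open Filter

noncomputable section

variable {W₁ W₂ : Type*}
  [NormedAddCommGroup W₁] [InnerProductSpace ℂ W₁] [CompleteSpace W₁]
  [NormedAddCommGroup W₂] [InnerProductSpace ℂ W₂] [CompleteSpace W₂]

/-- `R = (L₁ - z)⁻¹` is a (bounded, everywhere defined) resolvent of the unbounded
operator `L₁` (defined on `dom`) at `z`. -/
def IsResolventAt (dom : Submodule ℂ W₁) (L1 : dom →ₗ[ℂ] W₁) (z : ℂ)
    (R : W₁ →L[ℂ] W₁) : Prop :=
  (∀ y : W₁, ∃ hy : R y ∈ dom, L1 ⟨R y, hy⟩ - z • R y = y) ∧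
  (∀ x : dom, R (L1 x - z • (x : W₁)) = x)

/-- The spectrum of the unbounded operator `L₁`: the complement of the resolvent set. -/
def specUnb (dom : Submodule ℂ W₁) (L1 : dom →ₗ[ℂ] W₁) : Set ℂ :=
  {z : ℂ | ¬ ∃ R : W₁ →L[ℂ] W₁, IsResolventAt dom L1 z R}

/-- `L₁` is a closed operator: its graph is closed in `W₁ × W₁`. -/
def IsClosedOp (dom : Submodule ℂ W₁) (L1 : dom →ₗ[ℂ] W₁) : Prop :=
  IsClosed {p : W₁ × W₁ | ∃ x : dom, p = ((x : W₁), L1 x)}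

/-- `S` is a bounded solution, mapping `W₂` into `Dom(L₁)`, of the Sylvester equation
`L₁S - SL₂ = M`. -/
def IsSylvesterSol (dom : Submodule ℂ W₁) (L1 : dom →ₗ[ℂ] W₁) (L2 : W₂ →L[ℂ] W₂)
    (M : W₂ →L[ℂ] W₁) (S : W₂ →L[ℂ] W₁) : Prop :=
  ∀ x : W₂, ∃ hx : S x ∈ dom, L1 ⟨S x, hx⟩ - S (L2 x) = M x

/-- `sep(L₁, L₂) = inf_{S ∈ 𝓛(W₂, Dom(L₁)), S ≠ 0} ‖L₁S - SL₂‖/‖S‖`. -/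
noncomputable def sepUnb (dom : Submodule ℂ W₁) (L1 : dom →ₗ[ℂ] W₁)
    (L2 : W₂ →L[ℂ] W₂) : ℝ :=
  sInf {r : ℝ | ∃ S : W₂ →L[ℂ] W₁, S ≠ 0 ∧ (∀ x : W₂, S x ∈ dom) ∧
    ∃ TS : W₂ →L[ℂ] W₁,
      (∀ (x : W₂) (hx : S x ∈ dom), TS x = L1 ⟨S x, hx⟩ - S (L2 x)) ∧
      r = ‖TS‖ / ‖S‖}

end
set_option linter.unusedSectionVars false
section ResolventBasics

variable {W₁ : Type*} [NormedAddCommGroup W₁] [InnerProductSpace ℂ W₁] [CompleteSpace W₁]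
variable {dom : Submodule ℂ W₁} {L1 : dom →ₗ[ℂ] W₁}

theorem res_apply_mem {z : ℂ} {R : W₁ →L[ℂ] W₁} (h : IsResolventAt dom L1 z R) (y : W₁) :
    R y ∈ dom := (h.1 y).choose

theorem res_eq {z : ℂ} {R : W₁ →L[ℂ] W₁} (h : IsResolventAt dom L1 z R) (y : W₁)
    (hy : R y ∈ dom) : L1 ⟨R y, hy⟩ = y + z • R y := by
  obtain ⟨h1, h2⟩ := h.1 y
  rw [sub_eq_iff_eq_add] at h2
  exact h2

theorem res_id {z w : ℂ} {Rz Rw : W₁ →L[ℂ] W₁} (hz : IsResolventAt dom L1 z Rz)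
    (hw : IsResolventAt dom L1 w Rw) (y : W₁) :
    Rz y - Rw y = (z - w) • Rz (Rw y) := by
  have hmem := res_apply_mem hw y
  have h1 : L1 ⟨Rw y, hmem⟩ = y + w • Rw y := res_eq hw y hmem
  have h2 := hz.2 ⟨Rw y, hmem⟩
  simp only [h1] at h2
  have h3 : y + w • Rw y - z • Rw y = y + (w - z) • Rw y := by
    rw [sub_smul]; abel
  rw [h3, map_add, map_smul] at h2
  have h4 := eq_sub_of_add_eq h2
  rw [h4]
  have : -(w - z) • Rz (Rw y) = (z - w) • Rz (Rw y) := by rw [neg_smul, ← neg_smul, neg_sub]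
  rw [← this, neg_smul]
  abel

theorem res_unique {z : ℂ} {R R' : W₁ →L[ℂ] W₁} (h : IsResolventAt dom L1 z R)
    (h' : IsResolventAt dom L1 z R') : R = R' := by
  ext y
  have h0 : R y - R' y = 0 := by simpa using res_id h h' y
  exact sub_eq_zero.mp h0

theorem res_neumann {z₀ : ℂ} {R : W₁ →L[ℂ] W₁} (h : IsResolventAt dom L1 z₀ R) {z : ℂ}
    (hz : ‖(z - z₀) • R‖ < 1) :
    IsResolventAt dom L1 z (R * Ring.inverse (1 - (z - z₀) • R)) := by
  set δ := z - z₀ with hδ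
  set u : (W₁ →L[ℂ] W₁)ˣ := Units.oneSub (δ • R) hz with hu
  have hcu : (↑u : W₁ →L[ℂ] W₁) = 1 - δ • R := rfl
  have hBu : Ring.inverse (1 - δ • R) = (↑u⁻¹ : W₁ →L[ℂ] W₁) := NormedRing.inverse_one_sub _ hz
  have h1 : (1 - δ • R) * Ring.inverse (1 - δ • R) = 1 := by
    rw [hBu, ← hcu]; exact u.mul_inv
  have h2 : Ring.inverse (1 - δ • R) * (1 - δ • R) = 1 := by
    rw [hBu, ← hcu]; exact u.inv_mul
  have hcomm : Commute R (Ring.inverse (1 - δ • R)) := by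
    have hc : Commute R (1 - δ • R) :=
      (Commute.one_right R).sub_right ((Commute.refl R).smul_right δ)
    rw [hBu]
    exact (hcu ▸ hc : Commute R (↑u : W₁ →L[ℂ] W₁)).units_inv_right
  set B : W₁ →L[ℂ] W₁ := Ring.inverse (1 - δ • R) with hB
  constructor
  · intro y
    have hmem : (R * B) y ∈ dom := by
      rw [ContinuousLinearMap.mul_apply]; exact res_apply_mem h (B y)
    refine ⟨hmem, ?_⟩
    have heq : L1 ⟨(R * B) y, hmem⟩ = B y + z₀ • R (B y) := res_eq h (B y) _
    rw [heq]
    have happ : ((1 - δ • R) * B) y = B y - δ • R (B y) := by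
      simp [ContinuousLinearMap.mul_apply, ContinuousLinearMap.sub_apply,
        ContinuousLinearMap.smul_apply]
    have hy : B y - δ • R (B y) = y := by rw [← happ, h1]; simp
    calc B y + z₀ • R (B y) - z • (R * B) y
        = B y - δ • R (B y) := by
          rw [ContinuousLinearMap.mul_apply, hδ, sub_smul]; abel
      _ = y := hy
  · intro x
    have hswap : R * B = B * R := hcomm.eq
    have hRx : R (L1 x - z₀ • (x : W₁)) = x := h.2 x
    have hsplit : L1 x - z • (x : W₁) = (L1 x - z₀ • (x : W₁)) - δ • (x : W₁) := by
      rw [hδ, sub_smul]; abel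
    rw [hswap, ContinuousLinearMap.mul_apply, hsplit, map_sub, map_smul, hRx]
    have hone : (x : W₁) - δ • R x = (1 - δ • R) x := by
      simp [ContinuousLinearMap.sub_apply, ContinuousLinearMap.smul_apply]
    rw [hone, ← ContinuousLinearMap.mul_apply, h2]
    simp

open Classical in
noncomputable def r1f (dom : Submodule ℂ W₁) (L1 : dom →ₗ[ℂ] W₁) : ℂ → W₁ →L[ℂ] W₁ :=
  fun z => if h : ∃ R, IsResolventAt dom L1 z R then h.choose else 0

theorem r1f_res {z : ℂ} (h : z ∉ specUnb dom L1) :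
    IsResolventAt dom L1 z (r1f dom L1 z) := by
  have h' : ∃ R, IsResolventAt dom L1 z R := by
    simpa [specUnb] using h
  unfold r1f
  rw [dif_pos h']
  exact h'.choose_spec

theorem r1f_eq {z : ℂ} {R : W₁ →L[ℂ] W₁} (h : IsResolventAt dom L1 z R) :
    r1f dom L1 z = R := by
  have hz : z ∉ specUnb dom L1 := by simp [specUnb]; exact ⟨R, h⟩
  exact res_unique (r1f_res hz) h

theorem not_specUnb_of_res {z : ℂ} {R : W₁ →L[ℂ] W₁} (h : IsResolventAt dom L1 z R) :
    z ∉ specUnb dom L1 := by simp [specUnb]; exact ⟨R, h⟩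

theorem specUnb_compl_ball {z₀ : ℂ} (h : z₀ ∉ specUnb dom L1) {z : ℂ}
    (hz : ‖z - z₀‖ * ‖r1f dom L1 z₀‖ < 1) : z ∉ specUnb dom L1 := by
  have hres := r1f_res h
  have : ‖(z - z₀) • r1f dom L1 z₀‖ < 1 := by rw [norm_smul]; exact hz
  exact not_specUnb_of_res (res_neumann hres this)

theorem r1f_eventuallyEq {z₀ : ℂ} (h : z₀ ∉ specUnb dom L1) :
    ∀ᶠ z in 𝓝 z₀, r1f dom L1 z
      = r1f dom L1 z₀ * Ring.inverse (1 - (z - z₀) • r1f dom L1 z₀) := by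
  have hball : Metric.ball z₀ (‖r1f dom L1 z₀‖ + 1)⁻¹ ∈ 𝓝 z₀ :=
    Metric.ball_mem_nhds _ (by positivity)
  filter_upwards [hball] with z hz
  have hlt : ‖(z - z₀) • r1f dom L1 z₀‖ < 1 := by
    rw [norm_smul]
    rw [Metric.mem_ball, dist_eq_norm] at hz
    calc ‖z - z₀‖ * ‖r1f dom L1 z₀‖ ≤ ‖z - z₀‖ * (‖r1f dom L1 z₀‖ + 1) := by
          apply mul_le_mul_of_nonneg_left (by linarith) (norm_nonneg _)
      _ < (‖r1f dom L1 z₀‖ + 1)⁻¹ * (‖r1f dom L1 z₀‖ + 1) := by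
          apply mul_lt_mul_of_pos_right hz (by positivity)
      _ = 1 := by field_simp
  exact r1f_eq (res_neumann (r1f_res h) hlt)

theorem r1f_differentiableAt {z₀ : ℂ} (h : z₀ ∉ specUnb dom L1) :
    DifferentiableAt ℂ (r1f dom L1) z₀ := by
  have hg : DifferentiableAt ℂ
      (fun z => r1f dom L1 z₀ * Ring.inverse (1 - (z - z₀) • r1f dom L1 z₀)) z₀ := by
    have hinner : DifferentiableAt ℂ (fun z : ℂ => 1 - (z - z₀) • r1f dom L1 z₀) z₀ := by
      apply (differentiableAt_const _).sub
      exact (differentiableAt_id.sub_const z₀).smul_const _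
    have hinv : DifferentiableAt ℂ
        (fun z => Ring.inverse (1 - (z - z₀) • r1f dom L1 z₀)) z₀ := by
      have hu : IsUnit ((fun z : ℂ => 1 - (z - z₀) • r1f dom L1 z₀) z₀) := by
        simp
      exact (differentiableAt_inverse hu).comp z₀ hinner
    exact (differentiableAt_const _).mul hinv
  exact hg.congr_of_eventuallyEq (r1f_eventuallyEq h)

theorem specUnb_isOpen_compl : IsOpen {z : ℂ | z ∉ specUnb dom L1} := by
  rw [Metric.isOpen_iff]
  intro z₀ h
  refine ⟨(‖r1f dom L1 z₀‖ + 1)⁻¹, by positivity, fun z hz => ?_⟩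
  rw [Metric.mem_ball, dist_eq_norm] at hz
  apply specUnb_compl_ball h
  calc ‖z - z₀‖ * ‖r1f dom L1 z₀‖ ≤ ‖z - z₀‖ * (‖r1f dom L1 z₀‖ + 1) := by
        apply mul_le_mul_of_nonneg_left (by linarith) (norm_nonneg _)
    _ < (‖r1f dom L1 z₀‖ + 1)⁻¹ * (‖r1f dom L1 z₀‖ + 1) := by
        apply mul_lt_mul_of_pos_right hz (by positivity)
    _ = 1 := by field_simp

end ResolventBasics
section R2Basics

variable {W₂ : Type*} [NormedAddCommGroup W₂] [InnerProductSpace ℂ W₂] [CompleteSpace W₂]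
variable {L2 : W₂ →L[ℂ] W₂}

/-- The resolvent `(z - L₂)⁻¹` of the bounded operator `L₂`. -/
noncomputable def r2f (L2 : W₂ →L[ℂ] W₂) : ℂ → W₂ →L[ℂ] W₂ :=
  fun z => Ring.inverse (z • (1 : W₂ →L[ℂ] W₂) - L2)

theorem isUnit_of_not_spec {z : ℂ} (h : z ∉ spectrum ℂ L2) :
    IsUnit (z • (1 : W₂ →L[ℂ] W₂) - L2) := by
  rw [spectrum.notMem_iff] at h
  rwa [Algebra.algebraMap_eq_smul_one] at h

theorem r2f_mul {z : ℂ} (h : z ∉ spectrum ℂ L2) :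
    (z • (1 : W₂ →L[ℂ] W₂) - L2) * r2f L2 z = 1 :=
  Ring.mul_inverse_cancel _ (isUnit_of_not_spec h)

theorem r2f_mul' {z : ℂ} (h : z ∉ spectrum ℂ L2) :
    r2f L2 z * (z • (1 : W₂ →L[ℂ] W₂) - L2) = 1 :=
  Ring.inverse_mul_cancel _ (isUnit_of_not_spec h)

theorem not_spec_of_inv {z : ℂ} {R : W₂ →L[ℂ] W₂}
    (h1 : (z • (1 : W₂ →L[ℂ] W₂) - L2) ∘L R = 1) (h2 : R ∘L (z • (1 : W₂ →L[ℂ] W₂) - L2) = 1) :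
    z ∉ spectrum ℂ L2 := by
  rw [spectrum.notMem_iff, Algebra.algebraMap_eq_smul_one]
  exact ⟨⟨z • (1 : W₂ →L[ℂ] W₂) - L2, R,
    by rw [ContinuousLinearMap.mul_def]; exact h1,
    by rw [ContinuousLinearMap.mul_def]; exact h2⟩, rfl⟩

theorem r2f_of_inv {z : ℂ} {R : W₂ →L[ℂ] W₂}
    (h1 : (z • (1 : W₂ →L[ℂ] W₂) - L2) ∘L R = 1) (h2 : R ∘L (z • (1 : W₂ →L[ℂ] W₂) - L2) = 1) :
    r2f L2 z = R := by
  set u : (W₂ →L[ℂ] W₂)ˣ := ⟨z • (1 : W₂ →L[ℂ] W₂) - L2, R,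
    by rw [ContinuousLinearMap.mul_def]; exact h1,
    by rw [ContinuousLinearMap.mul_def]; exact h2⟩ with hu
  have : r2f L2 z = Ring.inverse ((u : W₂ →L[ℂ] W₂)) := rfl
  rw [this, Ring.inverse_unit u]
  rfl

theorem r2f_sub {z w : ℂ} (hz : z ∉ spectrum ℂ L2) (hw : w ∉ spectrum ℂ L2) :
    r2f L2 z - r2f L2 w = (w - z) • (r2f L2 z * r2f L2 w) := by
  have h1 : r2f L2 z * ((w • (1 : W₂ →L[ℂ] W₂) - L2) * r2f L2 w) = r2f L2 z := by
    rw [r2f_mul hw, mul_one]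
  have h2 : (r2f L2 z * (z • (1 : W₂ →L[ℂ] W₂) - L2)) * r2f L2 w = r2f L2 w := by
    rw [r2f_mul' hz, one_mul]
  calc r2f L2 z - r2f L2 w
      = r2f L2 z * ((w • (1 : W₂ →L[ℂ] W₂) - L2) * r2f L2 w)
        - (r2f L2 z * (z • (1 : W₂ →L[ℂ] W₂) - L2)) * r2f L2 w := by rw [h1, h2]
    _ = r2f L2 z * (((w • (1 : W₂ →L[ℂ] W₂) - L2) - (z • (1 : W₂ →L[ℂ] W₂) - L2)) * r2f L2 w) := by
        noncomm_ring
    _ = r2f L2 z * (((w - z) • (1 : W₂ →L[ℂ] W₂)) * r2f L2 w) := by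
        congr 2
        rw [sub_smul]; abel
    _ = (w - z) • (r2f L2 z * r2f L2 w) := by
        rw [smul_mul_assoc, one_mul, mul_smul_comm]

theorem r2f_differentiableAt {z₀ : ℂ} (h : z₀ ∉ spectrum ℂ L2) :
    DifferentiableAt ℂ (r2f L2) z₀ := by
  have hinner : DifferentiableAt ℂ (fun z : ℂ => z • (1 : W₂ →L[ℂ] W₂) - L2) z₀ :=
    (differentiableAt_id.smul_const _).sub_const _
  exact (differentiableAt_inverse (isUnit_of_not_spec h)).comp z₀ hinner

theorem not_spec_of_norm_lt (L2 : W₂ →L[ℂ] W₂) {z : ℂ} (h : ‖L2‖ < ‖z‖) :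
    z ∉ spectrum ℂ L2 := by
  rcases subsingleton_or_nontrivial W₂ with hW | hW
  · rw [spectrum.notMem_iff]
    exact isUnit_of_subsingleton _
  · intro hz
    exact absurd (spectrum.norm_le_norm_of_mem hz) (not_le.mpr h)

theorem r2f_norm_le {z : ℂ} (h : ‖L2‖ < ‖z‖) : ‖r2f L2 z‖ ≤ (‖z‖ - ‖L2‖)⁻¹ := by
  have hz := not_spec_of_norm_lt L2 h
  have h1 : z • r2f L2 z = 1 + L2 * r2f L2 z := by
    have := r2f_mul hz
    rw [sub_mul, smul_mul_assoc, one_mul] at this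
    rw [← this]; abel
  have h2 : ‖z‖ * ‖r2f L2 z‖ ≤ 1 + ‖L2‖ * ‖r2f L2 z‖ := by
    calc ‖z‖ * ‖r2f L2 z‖ = ‖z • r2f L2 z‖ := by rw [norm_smul]
      _ = ‖1 + L2 * r2f L2 z‖ := by rw [h1]
      _ ≤ ‖(1 : W₂ →L[ℂ] W₂)‖ + ‖L2 * r2f L2 z‖ := norm_add_le _ _
      _ ≤ 1 + ‖L2‖ * ‖r2f L2 z‖ := by
          gcongr
          · exact ContinuousLinearMap.norm_id_le
          · exact norm_mul_le _ _
  have h3 : (‖z‖ - ‖L2‖) * ‖r2f L2 z‖ ≤ 1 := by nlinarith [norm_nonneg (r2f L2 z)]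
  rw [inv_eq_one_div, le_div_iff₀ (by linarith : (0:ℝ) < ‖z‖ - ‖L2‖)]
  nlinarith

theorem r2f_tendsto_zero (L2 : W₂ →L[ℂ] W₂) :
    Filter.Tendsto (r2f L2) (Bornology.cobounded ℂ) (𝓝 0) := by
  have hb : ∀ᶠ z in Bornology.cobounded ℂ, ‖r2f L2 z‖ ≤ (‖z‖ - ‖L2‖)⁻¹ := by
    filter_upwards [eventually_cobounded_le_norm (‖L2‖ + 1)] with z hz
    exact r2f_norm_le (by linarith)
  have ht : Filter.Tendsto (fun z : ℂ => (‖z‖ - ‖L2‖)⁻¹) (Bornology.cobounded ℂ) (𝓝 0) := by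
    apply Filter.Tendsto.inv_tendsto_atTop
    have := Filter.tendsto_atTop_add_const_right (Bornology.cobounded ℂ) (-‖L2‖)
      tendsto_norm_cobounded_atTop
    simpa [sub_eq_add_neg] using this
  exact squeeze_zero_norm' hb ht

end R2Basics
section ClosedGraph

open MeasureTheory

variable {W₁ : Type*} [NormedAddCommGroup W₁] [InnerProductSpace ℂ W₁] [CompleteSpace W₁]
variable {dom : Submodule ℂ W₁} {L1 : dom →ₗ[ℂ] W₁}

theorem graph_convex : Convex ℝ {p : W₁ × W₁ | ∃ x : dom, p = ((x : W₁), L1 x)} := by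
  intro p hp q hq a b _ _ _
  obtain ⟨x, rfl⟩ := hp
  obtain ⟨y, rfl⟩ := hq
  refine ⟨(a : ℂ) • x + (b : ℂ) • y, ?_⟩
  have h1 : ∀ v : W₁, a • v = (a : ℂ) • v := fun v => by
    rw [← algebraMap_smul ℂ a v, Complex.coe_algebraMap]
  have h2 : ∀ v : W₁, b • v = (b : ℂ) • v := fun v => by
    rw [← algebraMap_smul ℂ b v, Complex.coe_algebraMap]
  have : a • ((x : W₁), L1 x) + b • ((y : W₁), L1 y)
      = (a • (x : W₁) + b • (y : W₁), a • L1 x + b • L1 y) := rfl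
  rw [this]
  have hcoe : ((((a : ℂ) • x + (b : ℂ) • y : dom)) : W₁) = a • (x : W₁) + b • (y : W₁) := by
    push_cast
    rw [h1, h2]
  have hL : L1 ((a : ℂ) • x + (b : ℂ) • y) = a • L1 x + b • L1 y := by
    rw [map_add, _root_.map_smul, _root_.map_smul, h1 (L1 x), h2 (L1 y)]
  rw [Prod.mk.injEq]
  exact ⟨hcoe.symm, hL.symm⟩

theorem closedOp_integral (hclosed : IsClosedOp dom L1)
    {f g : ℝ → W₁} (hf : Continuous f) (hg : Continuous g)
    (hfg : ∀ t, ∃ h : f t ∈ dom, L1 ⟨f t, h⟩ = g t) :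
    ∃ h : (∫ t in (0:ℝ)..1, f t) ∈ dom,
      L1 ⟨∫ t in (0:ℝ)..1, f t, h⟩ = ∫ t in (0:ℝ)..1, g t := by
  set μ := volume.restrict (Set.Ioc (0:ℝ) 1) with hμ
  haveI : IsProbabilityMeasure μ := by
    constructor
    rw [hμ, Measure.restrict_apply MeasurableSet.univ, Set.univ_inter, Real.volume_Ioc]
    norm_num
  have hfi : Integrable f μ := hf.integrableOn_Ioc
  have hgi : Integrable g μ := hg.integrableOn_Ioc
  have hFi : Integrable (fun t => (f t, g t)) μ := hfi.prodMk hgi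
  have hmem_ae : ∀ᵐ t ∂μ, (f t, g t) ∈ {p : W₁ × W₁ | ∃ x : dom, p = ((x : W₁), L1 x)} := by
    filter_upwards with t
    exact ⟨⟨f t, (hfg t).choose⟩, by rw [(hfg t).choose_spec]⟩
  have hint := graph_convex.integral_mem hclosed hmem_ae hFi
  have hpair : ∫ t, (f t, g t) ∂μ = (∫ t, f t ∂μ, ∫ t, g t ∂μ) := integral_pair hfi hgi
  rw [hpair] at hint
  obtain ⟨x, hx⟩ := hint
  have hfeq : (∫ t in (0:ℝ)..1, f t) = (x : W₁) := by
    rw [intervalIntegral.integral_of_le zero_le_one]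
    exact congrArg Prod.fst hx
  have hgeq : (∫ t in (0:ℝ)..1, g t) = L1 x := by
    rw [intervalIntegral.integral_of_le zero_le_one]
    exact congrArg Prod.snd hx
  refine ⟨hfeq ▸ x.2, ?_⟩
  have hsub : (⟨∫ t in (0:ℝ)..1, f t, hfeq ▸ x.2⟩ : dom) = x := Subtype.ext hfeq
  rw [hsub, hgeq]

end ClosedGraph
section Curves

open MeasureTheory intervalIntegral

theorem curve_integral_differentiableAt {E : Type*} [NormedAddCommGroup E] [NormedSpace ℂ E]
    [CompleteSpace E] {γ : ℝ → ℂ} (hγ : ContDiff ℝ 1 γ) {G : ℝ → E} (hG : Continuous G)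
    {w₀ : ℂ} (hw : ∀ t, γ t ≠ w₀) :
    DifferentiableAt ℂ (fun w => ∫ t in (0:ℝ)..1, (deriv γ t / (γ t - w)) • G t) w₀ := by
  have hγc : Continuous γ := hγ.continuous
  have hγ' : Continuous (deriv γ) := hγ.continuous_deriv le_rfl
  obtain ⟨t₀, ht₀, hmin⟩ := isCompact_Icc.exists_isMinOn (Set.nonempty_Icc.mpr zero_le_one)
    ((hγc.sub continuous_const).norm.continuousOn :
      ContinuousOn (fun t => ‖γ t - w₀‖) (Set.Icc (0:ℝ) 1))
  set ε : ℝ := ‖γ t₀ - w₀‖ / 2 with hε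
  have hε0 : 0 < ε := by
    have h0 : γ t₀ - w₀ ≠ 0 := sub_ne_zero.mpr (hw t₀)
    have := norm_pos_iff.mpr h0
    positivity
  have hkey : ∀ t ∈ Set.Icc (0:ℝ) 1, ∀ x ∈ Metric.ball w₀ ε, ε ≤ ‖γ t - x‖ := by
    intro t ht x hx
    have h1 : 2 * ε ≤ ‖γ t - w₀‖ := by
      have := isMinOn_iff.mp hmin t ht
      rw [hε]; simp only [Pi.sub_apply] at this; linarith
    have h2 : ‖x - w₀‖ < ε := by rwa [Metric.mem_ball, dist_eq_norm] at hx
    have h3 : ‖γ t - w₀‖ ≤ ‖γ t - x‖ + ‖x - w₀‖ := by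
      calc ‖γ t - w₀‖ = ‖(γ t - x) + (x - w₀)‖ := by rw [sub_add_sub_cancel]
        _ ≤ ‖γ t - x‖ + ‖x - w₀‖ := norm_add_le _ _
    linarith
  have hmeas : ∀ x : ℂ, AEStronglyMeasurable (fun t => (deriv γ t / (γ t - x)) • G t)
      (volume.restrict (Set.uIoc (0:ℝ) 1)) := by
    intro x
    exact (((hγ'.measurable.div ((hγc.sub continuous_const).measurable)).stronglyMeasurable).smul
      hG.stronglyMeasurable).aestronglyMeasurable
  have hint : IntervalIntegrable (fun t => (deriv γ t / (γ t - w₀)) • G t) volume 0 1 :=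
    ((hγ'.div (hγc.sub continuous_const) (fun t => sub_ne_zero.mpr (hw t))).smul
      hG).intervalIntegrable _ _
  have hIsub : Set.uIoc (0:ℝ) 1 ⊆ Set.Icc (0:ℝ) 1 := by
    rw [Set.uIoc_of_le zero_le_one]; exact Set.Ioc_subset_Icc_self
  have hmain := intervalIntegral.hasDerivAt_integral_of_dominated_loc_of_deriv_le
    (F := fun w t => (deriv γ t / (γ t - w)) • G t)
    (F' := fun w t => (deriv γ t / (γ t - w) ^ 2) • G t)
    (bound := fun t => ‖deriv γ t‖ * ‖G t‖ / ε ^ 2)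
    (μ := volume) (a := (0:ℝ)) (b := 1) (x₀ := w₀) (Metric.ball_mem_nhds w₀ hε0)
    (Filter.Eventually.of_forall fun x => hmeas x) hint
    (by
      exact (((hγ'.measurable.div
        (((hγc.sub continuous_const).measurable).pow_const 2)).stronglyMeasurable).smul
        hG.stronglyMeasurable).aestronglyMeasurable)
    (Filter.Eventually.of_forall fun t ht x hx => by
      have hts := hIsub ht
      have hd := hkey t hts x hx
      rw [norm_smul, norm_div, norm_pow]
      have h1 : ε ^ 2 ≤ ‖γ t - x‖ ^ 2 := by
        apply pow_le_pow_left₀ hε0.le hd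
      rw [div_mul_eq_mul_div]
      apply div_le_div₀ (by positivity) ?_ (by positivity) h1
      exact mul_le_mul_of_nonneg_right le_rfl (norm_nonneg _))
    (by
      apply Continuous.intervalIntegrable
      exact ((hγ'.norm.mul hG.norm).div_const _))
    (Filter.Eventually.of_forall fun t ht x hx => by
      have hts := hIsub ht
      have hd := hkey t hts x hx
      have hne : γ t - x ≠ 0 := by
        intro h0
        rw [h0, norm_zero] at hd; linarith
      have hd1 : HasDerivAt (fun w : ℂ => γ t - w) (-1) x := by
        simpa using (hasDerivAt_id x).const_sub (γ t)
      have hd2 := (hasDerivAt_const x (deriv γ t)).div hd1 hne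
      have hd3 := hd2.smul_const (G t)
      refine hd3.congr_deriv ?_
      simp)
  exact hmain.2.differentiableAt

theorem curve_integral_tendsto_zero {E : Type*} [NormedAddCommGroup E] [NormedSpace ℂ E]
    [CompleteSpace E] {γ : ℝ → ℂ} (hγ : ContDiff ℝ 1 γ) {G : ℝ → E} (hG : Continuous G) :
    Filter.Tendsto (fun w => ∫ t in (0:ℝ)..1, (deriv γ t / (γ t - w)) • G t)
      (Bornology.cobounded ℂ) (𝓝 0) := by
  have hγc : Continuous γ := hγ.continuous
  have hγ' : Continuous (deriv γ) := hγ.continuous_deriv le_rfl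
  obtain ⟨C, hC⟩ := isCompact_Icc.exists_bound_of_continuousOn
    ((hγ'.smul hG).continuousOn : ContinuousOn (fun t => deriv γ t • G t) (Set.Icc (0:ℝ) 1))
  obtain ⟨R₀, hR₀⟩ := isCompact_Icc.exists_bound_of_continuousOn
    (hγc.continuousOn : ContinuousOn γ (Set.Icc (0:ℝ) 1))
  set C' : ℝ := max C 0 with hC'
  have hIsub : Set.uIoc (0:ℝ) 1 ⊆ Set.Icc (0:ℝ) 1 := by
    rw [Set.uIoc_of_le zero_le_one]; exact Set.Ioc_subset_Icc_self
  have hb : ∀ᶠ w in Bornology.cobounded ℂ,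
      ‖∫ t in (0:ℝ)..1, (deriv γ t / (γ t - w)) • G t‖ ≤ C' / (‖w‖ - R₀) := by
    filter_upwards [eventually_cobounded_le_norm (R₀ + 1)] with w hwn
    have h2 : ∀ t ∈ Set.uIoc (0:ℝ) 1, ‖(deriv γ t / (γ t - w)) • G t‖ ≤ C' / (‖w‖ - R₀) := by
      intro t ht
      have hts := hIsub ht
      have hd : ‖w‖ - R₀ ≤ ‖γ t - w‖ := by
        have h3 : ‖w‖ - ‖γ t‖ ≤ ‖w - γ t‖ := norm_sub_norm_le _ _
        rw [norm_sub_rev]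
        have := hR₀ t hts
        linarith
      have hdpos : (0:ℝ) < ‖w‖ - R₀ := by linarith
      rw [norm_smul, norm_div]
      calc ‖deriv γ t‖ / ‖γ t - w‖ * ‖G t‖
          = ‖deriv γ t • G t‖ / ‖γ t - w‖ := by rw [norm_smul]; ring
        _ ≤ C' / (‖w‖ - R₀) := by
            apply div_le_div₀ (le_max_right C 0) ?_ hdpos hd
            exact le_trans (hC t hts) (le_max_left C 0)
    have := intervalIntegral.norm_integral_le_of_norm_le_const h2
    simpa using this
  have ht : Filter.Tendsto (fun w : ℂ => C' / (‖w‖ - R₀)) (Bornology.cobounded ℂ) (𝓝 0) := by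
    have h1 : Filter.Tendsto (fun w : ℂ => ‖w‖ - R₀) (Bornology.cobounded ℂ) Filter.atTop := by
      have := Filter.tendsto_atTop_add_const_right (Bornology.cobounded ℂ) (-R₀)
        tendsto_norm_cobounded_atTop
      simpa [sub_eq_add_neg] using this
    have h2 := h1.inv_tendsto_atTop.const_mul C'
    simpa [div_eq_mul_inv] using h2
  exact squeeze_zero_norm' hb ht

theorem curve_winding_integer {γ : ℝ → ℂ} (hγ : ContDiff ℝ 1 γ)
    (hper : ∀ t, γ (t + 1) = γ t) {w : ℂ} (hw : ∀ t, γ t ≠ w) :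
    ∃ n : ℤ, ∫ t in (0:ℝ)..1, deriv γ t / (γ t - w) = n * (2 * Real.pi * Complex.I) := by
  have hγc : Continuous γ := hγ.continuous
  have hγ' : Continuous (deriv γ) := hγ.continuous_deriv le_rfl
  have hh : Continuous (fun t => deriv γ t / (γ t - w)) :=
    hγ'.div (hγc.sub continuous_const) (fun t => sub_ne_zero.mpr (hw t))
  set φ : ℝ → ℂ := fun s => ∫ t in (0:ℝ)..s, deriv γ t / (γ t - w) with hφdef
  have hφ : ∀ s, HasDerivAt φ (deriv γ s / (γ s - w)) s := fun s =>
    intervalIntegral.integral_hasDerivAt_right (hh.intervalIntegrable 0 s)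
      (hh.stronglyMeasurableAtFilter _ _) hh.continuousAt
  set g : ℝ → ℂ := fun s => Complex.exp (-φ s) * (γ s - w) with hgdef
  have hg0 : ∀ s, HasDerivAt g 0 s := by
    intro s
    have hne : γ s - w ≠ 0 := sub_ne_zero.mpr (hw s)
    have h1 : HasDerivAt (fun s => -φ s) (-(deriv γ s / (γ s - w))) s := (hφ s).neg
    have h2 := h1.cexp
    have h3 : HasDerivAt (fun s => γ s - w) (deriv γ s) s :=
      ((hγ.differentiable one_ne_zero) s).hasDerivAt.sub_const w
    have h4 := h2.mul h3
    refine h4.congr_deriv ?_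
    have hq : deriv γ s / (γ s - w) * (γ s - w) = deriv γ s := div_mul_cancel₀ _ hne
    linear_combination (-Complex.exp (-φ s)) * hq
  have hconst : g 1 = g 0 :=
    is_const_of_deriv_eq_zero (fun s => (hg0 s).differentiableAt) (fun s => (hg0 s).deriv) 1 0
  have hγ10 : γ 1 = γ 0 := by simpa using hper 0
  have hφ0 : φ 0 = 0 := intervalIntegral.integral_same
  have hne0 : γ 0 - w ≠ 0 := sub_ne_zero.mpr (hw 0)
  have heq : Complex.exp (-φ 1) = 1 := by
    rw [hgdef] at hconst
    simp only [hφ0, neg_zero, Complex.exp_zero, one_mul, hγ10] at hconst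
    exact mul_right_cancel₀ hne0 (hconst.trans (one_mul _).symm)
  obtain ⟨n, hn⟩ := Complex.exp_eq_one_iff.mp heq
  refine ⟨-n, ?_⟩
  have h5 : ∫ (t : ℝ) in (0:ℝ)..1, deriv γ t / (γ t - w)
      = -(↑n * (2 * ↑Real.pi * Complex.I)) := by rw [← hn]; ring
  rw [h5]
  push_cast
  ring

theorem curves_gap {N : ℕ} {γ : Fin N → ℝ → ℂ} (hγ : ∀ k, ContDiff ℝ 1 (γ k))
    (hper : ∀ k t, γ k (t + 1) = γ k t) {w : ℂ} (hw : ∀ k t, γ k t ≠ w) :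
    ∃ δ > 0, ∀ z ∈ Metric.ball w δ, ∀ k t, γ k t ≠ z := by
  have hrange : ∀ k, Set.range (γ k) = γ k '' Set.uIcc 0 (0 + 1) := by
    intro k
    have hp : Function.Periodic (γ k) 1 := hper k
    exact (hp.image_uIcc one_ne_zero 0).symm
  set K := ⋃ k, Set.range (γ k) with hK
  have hKc : IsCompact K := isCompact_iUnion (fun k => by
    rw [hrange k]; exact isCompact_uIcc.image (hγ k).continuous)
  have hwK : w ∈ Kᶜ := by
    simp only [hK, Set.mem_compl_iff, Set.mem_iUnion, Set.mem_range, not_exists]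
    exact fun k t => hw k t
  obtain ⟨δ, hδ0, hball⟩ := Metric.isOpen_iff.mp hKc.isClosed.isOpen_compl w hwK
  refine ⟨δ, hδ0, fun z hz k t hzt => ?_⟩
  have := hball hz
  simp only [hK, Set.mem_compl_iff, Set.mem_iUnion, Set.mem_range, not_exists] at this
  exact this k t hzt

end Curves
section Nu

open MeasureTheory Bornology

theorem liouville_zero {E : Type*} [NormedAddCommGroup E] [NormedSpace ℂ E]
    {f : ℂ → E} (hd : Differentiable ℂ f)
    (h0 : Filter.Tendsto f (Bornology.cobounded ℂ) (𝓝 0)) : ∀ w, f w = 0 := by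
  have h0' : Filter.Tendsto (fun w => ‖f w‖) (Bornology.cobounded ℂ) (𝓝 0) := by
    simpa using h0.norm
  have hev : ∀ᶠ w in Bornology.cobounded ℂ, ‖f w‖ ≤ 1 :=
    h0'.eventually (eventually_le_nhds one_pos)
  rw [← comap_norm_atTop, Filter.eventually_comap, Filter.eventually_atTop] at hev
  obtain ⟨R, hR⟩ := hev
  obtain ⟨C₁, hC₁⟩ := (isCompact_closedBall (0:ℂ) R).exists_bound_of_continuousOn
    hd.continuous.continuousOn
  have hb : Bornology.IsBounded (Set.range f) := by
    rw [isBounded_iff_forall_norm_le]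
    refine ⟨max C₁ 1, ?_⟩
    rintro x ⟨w, rfl⟩
    rcases le_or_gt R ‖w‖ with hw | hw
    · exact le_trans (hR ‖w‖ hw w rfl) (le_max_right _ _)
    · refine le_trans (hC₁ w ?_) (le_max_left _ _)
      simpa [Metric.mem_closedBall, dist_eq_norm] using hw.le
  intro w
  have hconst := hd.apply_eq_apply_of_bounded hb w 0
  have h2 : Filter.Tendsto (fun _ : ℂ => f 0) (Bornology.cobounded ℂ) (𝓝 0) :=
    h0.congr (fun x => hd.apply_eq_apply_of_bounded hb x 0)
  have h3 : f 0 = 0 := tendsto_nhds_unique tendsto_const_nhds h2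
  rw [hconst, h3]

theorem two_pi_I_ne_zero' : (2 * Real.pi * Complex.I : ℂ) ≠ 0 := by
  simp [Real.pi_ne_zero, Complex.I_ne_zero]

theorem curve_bound {γ : ℝ → ℂ} (hγ : ContDiff ℝ 1 γ) (hp : ∀ t, γ (t + 1) = γ t) :
    ∃ R, ∀ t, ‖γ t‖ ≤ R := by
  have hper : Function.Periodic γ 1 := hp
  obtain ⟨R, hR⟩ := isCompact_uIcc.exists_bound_of_continuousOn
    (hγ.continuous.continuousOn : ContinuousOn γ (Set.uIcc 0 (0 + 1)))
  refine ⟨R, fun t => ?_⟩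
  have : γ t ∈ γ '' Set.uIcc 0 (0 + 1) := by
    rw [hper.image_uIcc one_ne_zero 0]
    exact Set.mem_range_self t
  obtain ⟨s, hs, hst⟩ := this
  rw [← hst]
  exact hR s hs

variable {N : ℕ} {γ : Fin N → ℝ → ℂ}

theorem curves_eventually_ne (hγs : ∀ k, ContDiff ℝ 1 (γ k))
    (hγp : ∀ k t, γ k (t + 1) = γ k t) :
    ∀ᶠ w in Bornology.cobounded ℂ, ∀ k t, γ k t ≠ w := by
  rw [Filter.eventually_all]
  intro k
  obtain ⟨R, hR⟩ := curve_bound (hγs k) (hγp k)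
  filter_upwards [eventually_cobounded_le_norm (R + 1)] with w hw t hteq
  have := hR t
  rw [hteq] at this
  linarith

theorem nu_integer (hγs : ∀ k, ContDiff ℝ 1 (γ k)) (hγp : ∀ k t, γ k (t + 1) = γ k t)
    {w : ℂ} (hw : ∀ k t, γ k t ≠ w) :
    ∃ n : ℤ, ∑ k, ∫ t in (0:ℝ)..1, deriv (γ k) t / (γ k t - w)
      = n * (2 * Real.pi * Complex.I) := by
  have h := fun k => curve_winding_integer (hγs k) (hγp k) (hw k)
  choose n hn using h
  refine ⟨∑ k, n k, ?_⟩
  rw [Finset.sum_congr rfl (fun k _ => hn k)]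
  rw [← Finset.sum_mul]
  push_cast
  ring

theorem nu_differentiableAt (hγs : ∀ k, ContDiff ℝ 1 (γ k)) {w : ℂ}
    (hw : ∀ k t, γ k t ≠ w) :
    DifferentiableAt ℂ (fun z => ∑ k, ∫ t in (0:ℝ)..1, deriv (γ k) t / (γ k t - z)) w := by
  apply DifferentiableAt.fun_sum
  intro k _
  have := curve_integral_differentiableAt (E := ℂ) (hγs k)
    (continuous_const : Continuous fun _ : ℝ => (1:ℂ)) (hw k)
  simpa [smul_eq_mul] using this

theorem norm_two_pi_I : ‖(2 * Real.pi * Complex.I : ℂ)‖ = 2 * Real.pi := by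
  rw [norm_mul, norm_mul, Complex.norm_I, mul_one]
  simp [Real.pi_pos.le, abs_of_nonneg]

theorem nu_locally_const (hγs : ∀ k, ContDiff ℝ 1 (γ k)) (hγp : ∀ k t, γ k (t + 1) = γ k t)
    {w₀ : ℂ} (hw : ∀ k t, γ k t ≠ w₀) :
    ∀ᶠ z in 𝓝 w₀, (∀ k t, γ k t ≠ z) ∧
      (∑ k, ∫ t in (0:ℝ)..1, deriv (γ k) t / (γ k t - z))
        = ∑ k, ∫ t in (0:ℝ)..1, deriv (γ k) t / (γ k t - w₀) := by
  set ν : ℂ → ℂ := fun z => ∑ k, ∫ t in (0:ℝ)..1, deriv (γ k) t / (γ k t - z) with hν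
  obtain ⟨δ, hδ0, hδ⟩ := curves_gap hγs hγp hw
  have hc : ContinuousAt ν w₀ := (nu_differentiableAt hγs hw).continuousAt
  have h1 : ∀ᶠ z in 𝓝 w₀, dist (ν z) (ν w₀) < 2 * Real.pi := by
    have h2 := Metric.tendsto_nhds.mp hc (2 * Real.pi) (by positivity)
    exact h2
  filter_upwards [h1, Metric.ball_mem_nhds w₀ hδ0] with z h2 h3
  have hzcur : ∀ k t, γ k t ≠ z := hδ z h3
  refine ⟨hzcur, ?_⟩
  obtain ⟨n, hn⟩ := nu_integer hγs hγp hzcur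
  obtain ⟨m, hm⟩ := nu_integer hγs hγp hw
  have hsub : ν z - ν w₀ = ((n - m : ℤ) : ℂ) * (2 * Real.pi * Complex.I) := by
    rw [hν]; dsimp only; rw [hn, hm]; push_cast; ring
  have hdist : ‖ν z - ν w₀‖ < 2 * Real.pi := by rwa [← dist_eq_norm]
  rw [hsub, norm_mul, norm_two_pi_I] at hdist
  have hnm : n = m := by
    by_contra hne
    have h4 : (1:ℝ) ≤ ‖((n - m : ℤ) : ℂ)‖ := by
      have h5 : (1:ℤ) ≤ |n - m| := Int.one_le_abs (sub_ne_zero.mpr hne)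
      have h6 : ((n - m : ℤ) : ℂ) = (((n - m : ℤ) : ℝ) : ℂ) := by push_cast; ring
      rw [h6, Complex.norm_real, Real.norm_eq_abs, ← Int.cast_abs]
      exact_mod_cast h5
    nlinarith [Real.pi_pos]
  have : ν z - ν w₀ = 0 := by rw [hsub, hnm]; simp
  have := sub_eq_zero.mp this
  exact this

theorem nu_tendsto_zero (hγs : ∀ k, ContDiff ℝ 1 (γ k)) :
    Filter.Tendsto (fun w => ∑ k, ∫ t in (0:ℝ)..1, deriv (γ k) t / (γ k t - w))
      (Bornology.cobounded ℂ) (𝓝 0) := by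
  have h := fun k : Fin N => curve_integral_tendsto_zero (E := ℂ) (hγs k)
    (continuous_const : Continuous fun _ : ℝ => (1:ℂ))
  have hsum := tendsto_finset_sum Finset.univ (fun k (_ : k ∈ Finset.univ) => h k)
  simp only [smul_eq_mul, mul_one] at hsum
  simpa using hsum

theorem nu_eventually_zero (hγs : ∀ k, ContDiff ℝ 1 (γ k))
    (hγp : ∀ k t, γ k (t + 1) = γ k t) :
    ∀ᶠ w in Bornology.cobounded ℂ, (∀ k t, γ k t ≠ w) ∧
      (∑ k, ∫ t in (0:ℝ)..1, deriv (γ k) t / (γ k t - w)) = 0 := by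
  have h1 := curves_eventually_ne hγs hγp
  have h2 : ∀ᶠ w in Bornology.cobounded ℂ,
      ‖∑ k, ∫ t in (0:ℝ)..1, deriv (γ k) t / (γ k t - w)‖ < 2 * Real.pi := by
    have h0' : Filter.Tendsto
        (fun w => ‖∑ k, ∫ t in (0:ℝ)..1, deriv (γ k) t / (γ k t - w)‖)
        (Bornology.cobounded ℂ) (𝓝 0) := by
      simpa using (nu_tendsto_zero hγs).norm
    exact h0'.eventually (eventually_lt_nhds (by positivity : (0:ℝ) < 2 * Real.pi))
  filter_upwards [h1, h2] with w hw hnorm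
  refine ⟨hw, ?_⟩
  obtain ⟨n, hn⟩ := nu_integer hγs hγp hw
  rw [hn, norm_mul, norm_two_pi_I] at hnorm
  have hn0 : n = 0 := by
    by_contra hne
    have h4 : (1:ℝ) ≤ ‖(n : ℂ)‖ := by
      have h5 : (1:ℤ) ≤ |n| := Int.one_le_abs hne
      have h6 : ((n : ℤ) : ℂ) = (((n : ℤ) : ℝ) : ℂ) := by push_cast; ring
      rw [h6, Complex.norm_real, Real.norm_eq_abs, ← Int.cast_abs]
      exact_mod_cast h5
    nlinarith [Real.pi_pos]
  rw [hn, hn0]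
  simp

end Nu
section CauchyThms

open MeasureTheory Bornology

theorem cauchy_bounded {W₂ : Type*} [NormedAddCommGroup W₂] [InnerProductSpace ℂ W₂]
    [CompleteSpace W₂] (L2 : W₂ →L[ℂ] W₂)
    {N : ℕ} {γ : Fin N → ℝ → ℂ} (hγs : ∀ k, ContDiff ℝ 1 (γ k))
    (hγp : ∀ k t, γ k (t + 1) = γ k t)
    (hres : ∀ k t, γ k t ∉ spectrum ℂ L2)
    (hwind2 : ∀ z ∈ spectrum ℂ L2,
      (2 * Real.pi * Complex.I)⁻¹ * ∑ k, ∫ t in (0:ℝ)..1, deriv (γ k) t / (γ k t - z) = 1) :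
    (∑ k, ∫ t in (0:ℝ)..1, deriv (γ k) t • r2f L2 (γ k t))
      = (2 * Real.pi * Complex.I) • (1 : W₂ →L[ℂ] W₂) := by
  classical
  set c2 : ℂ := 2 * Real.pi * Complex.I with hc2
  set r := r2f L2 with hrdef
  have hrc : ∀ k, Continuous fun t => r (γ k t) := fun k =>
    continuous_iff_continuousAt.mpr fun t =>
      ((r2f_differentiableAt (hres k t)).continuousAt).comp ((hγs k).continuous.continuousAt)
  have hγ' : ∀ k, Continuous (deriv (γ k)) := fun k => (hγs k).continuous_deriv le_rfl
  have hJint : ∀ k, IntervalIntegrable (fun t => deriv (γ k) t • r (γ k t)) volume 0 1 :=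
    fun k => ((hγ' k).smul (hrc k)).intervalIntegrable _ _
  set J : W₂ →L[ℂ] W₂ := ∑ k, ∫ t in (0:ℝ)..1, deriv (γ k) t • r (γ k t) with hJ
  set ν : ℂ → ℂ := fun w => ∑ k, ∫ t in (0:ℝ)..1, deriv (γ k) t / (γ k t - w) with hν
  set H : ℂ → (W₂ →L[ℂ] W₂) :=
    fun w => ∑ k, ∫ t in (0:ℝ)..1, (deriv (γ k) t / (γ k t - w)) • r (γ k t) with hH
  set Φ : ℂ → (W₂ →L[ℂ] W₂) :=
    fun w => if w ∈ spectrum ℂ L2 then H w else (c2 • 1 - J) * r w with hΦ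
  have hover : ∀ w, w ∉ spectrum ℂ L2 → (∀ k t, γ k t ≠ w) →
      H w = -(J * r w) + ν w • r w := by
    intro w hw hcur
    have hterm : ∀ k, (∫ t in (0:ℝ)..1, (deriv (γ k) t / (γ k t - w)) • r (γ k t))
        = -((∫ t in (0:ℝ)..1, deriv (γ k) t • r (γ k t)) * r w)
          + (∫ t in (0:ℝ)..1, deriv (γ k) t / (γ k t - w)) • r w := by
      intro k
      have hne : ∀ t, γ k t - w ≠ 0 := fun t => sub_ne_zero.mpr (hcur k t)
      have hpt : ∀ t, (deriv (γ k) t / (γ k t - w)) • r (γ k t)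
          = -(deriv (γ k) t • (r (γ k t) * r w))
            + (deriv (γ k) t / (γ k t - w)) • r w := by
        intro t
        have hid := r2f_sub (hres k t) hw
        have e1 : r (γ k t) = (w - γ k t) • (r (γ k t) * r w) + r w := by
          rw [← hrdef] at hid
          rw [← hid]; abel
        conv_lhs => rw [e1, smul_add, smul_smul]
        congr 1
        have hsc : (w - γ k t) = -(γ k t - w) := by ring
        rw [hsc, mul_neg, div_mul_cancel₀ _ (hne t), neg_smul]
      rw [intervalIntegral.integral_congr (fun t _ => hpt t)]
      have hia : IntervalIntegrable (fun t => -(deriv (γ k) t • (r (γ k t) * r w)))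
          volume 0 1 := (((hγ' k).smul ((hrc k).mul continuous_const)).neg).intervalIntegrable _ _
      have hib : IntervalIntegrable (fun t => (deriv (γ k) t / (γ k t - w)) • r w)
          volume 0 1 := (((hγ' k).div ((hγs k).continuous.sub continuous_const) hne).smul
            continuous_const).intervalIntegrable _ _
      rw [intervalIntegral.integral_add hia hib]
      congr 1
      · rw [intervalIntegral.integral_neg]
        congr 1
        have hmul := ((ContinuousLinearMap.mul ℂ (W₂ →L[ℂ] W₂)).flip (r w)).intervalIntegral_comp_comm (hJint k)
        simp only [ContinuousLinearMap.flip_apply, ContinuousLinearMap.mul_apply'] at hmul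
        rw [← hmul]
        apply intervalIntegral.integral_congr
        intro t _
        simp only [smul_mul_assoc]
      · rw [← intervalIntegral.integral_smul_const]
    rw [hH]
    dsimp only
    rw [Finset.sum_congr rfl (fun k _ => hterm k), Finset.sum_add_distrib]
    congr 1
    · rw [Finset.sum_neg_distrib, ← Finset.sum_mul]
    · rw [hν, ← Finset.sum_smul]
  have hΦdiff : Differentiable ℂ Φ := by
    intro w₀
    by_cases hw₀ : w₀ ∈ spectrum ℂ L2
    · have hcur : ∀ k t, γ k t ≠ w₀ := fun k t h => hres k t (h ▸ hw₀)
      have hν2 : ν w₀ = c2 := by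
        have h := hwind2 w₀ hw₀
        rw [hν]; dsimp only
        rw [hc2]
        calc (∑ k, ∫ t in (0:ℝ)..1, deriv (γ k) t / (γ k t - w₀))
            = (2 * Real.pi * Complex.I) * ((2 * Real.pi * Complex.I)⁻¹ *
              ∑ k, ∫ t in (0:ℝ)..1, deriv (γ k) t / (γ k t - w₀)) := by
              rw [← mul_assoc, mul_inv_cancel₀ two_pi_I_ne_zero', one_mul]
          _ = 2 * Real.pi * Complex.I := by rw [h, mul_one]
      have hev := nu_locally_const hγs hγp hcur
      have heq : Φ =ᶠ[𝓝 w₀] H := by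
        filter_upwards [hev] with z hz
        obtain ⟨hzc, hzν⟩ := hz
        by_cases hzs : z ∈ spectrum ℂ L2
        · rw [hΦ]; dsimp only; rw [if_pos hzs]
        · rw [hΦ]; dsimp only; rw [if_neg hzs]
          have hovz := hover z hzs hzc
          have hνz : ν z = c2 := by rw [hν]; dsimp only; rw [hzν]; exact hν2
          rw [hovz, hνz, sub_mul, smul_mul_assoc, one_mul]
          abel
      have hHd : DifferentiableAt ℂ H w₀ :=
        DifferentiableAt.fun_sum (fun k _ =>
          curve_integral_differentiableAt (hγs k) (hrc k) (hcur k))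
      exact hHd.congr_of_eventuallyEq heq
    · have hev : ∀ᶠ z in 𝓝 w₀, z ∉ spectrum ℂ L2 :=
        (spectrum.isClosed L2).isOpen_compl.eventually_mem hw₀
      have heq : Φ =ᶠ[𝓝 w₀] fun z => (c2 • 1 - J) * r z := by
        filter_upwards [hev] with z hz
        rw [hΦ]; dsimp only; rw [if_neg hz]
      exact (((differentiableAt_const _).mul (r2f_differentiableAt hw₀))).congr_of_eventuallyEq heq
  have hΦtend : Filter.Tendsto Φ (Bornology.cobounded ℂ) (𝓝 0) := by
    have hg : Filter.Tendsto (fun z => (c2 • 1 - J) * r z) (Bornology.cobounded ℂ) (𝓝 0) := by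
      have hcont : Continuous (fun T : W₂ →L[ℂ] W₂ => (c2 • 1 - J) * T) := continuous_mul_left _
      have := (hcont.tendsto 0).comp (r2f_tendsto_zero L2)
      rw [mul_zero] at this
      exact this
    have hev : (fun z => (c2 • 1 - J) * r z) =ᶠ[Bornology.cobounded ℂ] Φ := by
      filter_upwards [eventually_cobounded_le_norm (‖L2‖ + 1)] with z hz
      have hzs : z ∉ spectrum ℂ L2 := not_spec_of_norm_lt L2 (by linarith)
      rw [hΦ]; dsimp only; rw [if_neg hzs]
    exact hg.congr' hev
  have hΦ0 := liouville_zero hΦdiff hΦtend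
  set w₀ : ℂ := ((‖L2‖ + 1 : ℝ) : ℂ) with hw₀def
  have hw₀n : ‖w₀‖ = ‖L2‖ + 1 := by
    rw [hw₀def, Complex.norm_real, Real.norm_eq_abs, abs_of_pos (by positivity)]
  have hw₀s : w₀ ∉ spectrum ℂ L2 := not_spec_of_norm_lt L2 (by rw [hw₀n]; linarith)
  have h1 : (c2 • 1 - J) * r w₀ = 0 := by
    have := hΦ0 w₀
    rw [hΦ] at this; dsimp only at this; rwa [if_neg hw₀s] at this
  have h2 : c2 • (1 : W₂ →L[ℂ] W₂) - J = 0 := by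
    have h3 := congrArg (fun T => T * (w₀ • (1 : W₂ →L[ℂ] W₂) - L2)) h1
    rw [mul_assoc, hrdef, r2f_mul' hw₀s, mul_one, zero_mul] at h3
    exact h3
  exact (sub_eq_zero.mp h2).symm

theorem cauchy_unbounded
    {W₁ : Type*} [NormedAddCommGroup W₁] [InnerProductSpace ℂ W₁] [CompleteSpace W₁]
    {dom : Submodule ℂ W₁} {L1 : dom →ₗ[ℂ] W₁} (hdense : Dense (dom : Set W₁))
    {N : ℕ} {γ : Fin N → ℝ → ℂ} (hγs : ∀ k, ContDiff ℝ 1 (γ k))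
    (hγp : ∀ k t, γ k (t + 1) = γ k t)
    (hres : ∀ k t, γ k t ∉ specUnb dom L1)
    (hwind1 : ∀ z ∈ specUnb dom L1,
      (2 * Real.pi * Complex.I)⁻¹ * ∑ k, ∫ t in (0:ℝ)..1, deriv (γ k) t / (γ k t - z) = 0) :
    (∑ k, ∫ t in (0:ℝ)..1, deriv (γ k) t • r1f dom L1 (γ k t)) = 0 := by
  classical
  by_cases hN : N = 0
  · subst hN
    simp
  have hNe : Nonempty (Fin N) := ⟨⟨0, Nat.pos_of_ne_zero hN⟩⟩
  set r := r1f dom L1 with hrdef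
  have hrc : ∀ k, Continuous fun t => r (γ k t) := fun k =>
    continuous_iff_continuousAt.mpr fun t =>
      ((r1f_differentiableAt (hres k t)).continuousAt).comp ((hγs k).continuous.continuousAt)
  have hγ' : ∀ k, Continuous (deriv (γ k)) := fun k => (hγs k).continuous_deriv le_rfl
  have hJint : ∀ k, IntervalIntegrable (fun t => deriv (γ k) t • r (γ k t)) volume 0 1 :=
    fun k => ((hγ' k).smul (hrc k)).intervalIntegrable _ _
  set J : W₁ →L[ℂ] W₁ := ∑ k, ∫ t in (0:ℝ)..1, deriv (γ k) t • r (γ k t) with hJ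
  set ν : ℂ → ℂ := fun w => ∑ k, ∫ t in (0:ℝ)..1, deriv (γ k) t / (γ k t - w) with hν
  set H : ℂ → (W₁ →L[ℂ] W₁) :=
    fun w => ∑ k, ∫ t in (0:ℝ)..1, (deriv (γ k) t / (γ k t - w)) • r (γ k t) with hH
  set Φ : ℂ → (W₁ →L[ℂ] W₁) :=
    fun w => if w ∈ specUnb dom L1 then H w else J * r w with hΦ
  have hop : ∀ z w, z ∉ specUnb dom L1 → w ∉ specUnb dom L1 →
      r z - r w = (z - w) • (r z * r w) := by
    intro z w hz hw
    ext y
    simp only [ContinuousLinearMap.sub_apply, ContinuousLinearMap.smul_apply,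
      ContinuousLinearMap.mul_apply]
    exact res_id (r1f_res hz) (r1f_res hw) y
  have hover : ∀ w, w ∉ specUnb dom L1 → (∀ k t, γ k t ≠ w) →
      H w = J * r w + ν w • r w := by
    intro w hw hcur
    have hterm : ∀ k, (∫ t in (0:ℝ)..1, (deriv (γ k) t / (γ k t - w)) • r (γ k t))
        = (∫ t in (0:ℝ)..1, deriv (γ k) t • r (γ k t)) * r w
          + (∫ t in (0:ℝ)..1, deriv (γ k) t / (γ k t - w)) • r w := by
      intro k
      have hne : ∀ t, γ k t - w ≠ 0 := fun t => sub_ne_zero.mpr (hcur k t)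
      have hpt : ∀ t, (deriv (γ k) t / (γ k t - w)) • r (γ k t)
          = deriv (γ k) t • (r (γ k t) * r w)
            + (deriv (γ k) t / (γ k t - w)) • r w := by
        intro t
        have hid := hop (γ k t) w (hres k t) hw
        have e1 : r (γ k t) = (γ k t - w) • (r (γ k t) * r w) + r w := by
          rw [← hid]; abel
        conv_lhs => rw [e1, smul_add, smul_smul]
        rw [div_mul_cancel₀ _ (hne t)]
      rw [intervalIntegral.integral_congr (fun t _ => hpt t)]
      have hia : IntervalIntegrable (fun t => deriv (γ k) t • (r (γ k t) * r w))
          volume 0 1 := ((hγ' k).smul ((hrc k).mul continuous_const)).intervalIntegrable _ _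
      have hib : IntervalIntegrable (fun t => (deriv (γ k) t / (γ k t - w)) • r w)
          volume 0 1 := (((hγ' k).div ((hγs k).continuous.sub continuous_const) hne).smul
            continuous_const).intervalIntegrable _ _
      rw [intervalIntegral.integral_add hia hib]
      congr 1
      · have hmul := ((ContinuousLinearMap.mul ℂ (W₁ →L[ℂ] W₁)).flip (r w)).intervalIntegral_comp_comm (hJint k)
        simp only [ContinuousLinearMap.flip_apply, ContinuousLinearMap.mul_apply'] at hmul
        rw [← hmul]
        apply intervalIntegral.integral_congr
        intro t _
        simp only [smul_mul_assoc]
      · rw [← intervalIntegral.integral_smul_const]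
    rw [hH]
    dsimp only
    rw [Finset.sum_congr rfl (fun k _ => hterm k), Finset.sum_add_distrib]
    congr 1
    · rw [← Finset.sum_mul]
    · rw [hν, ← Finset.sum_smul]
  have hΦdiff : Differentiable ℂ Φ := by
    intro w₀
    by_cases hw₀ : w₀ ∈ specUnb dom L1
    · have hcur : ∀ k t, γ k t ≠ w₀ := fun k t h => hres k t (h ▸ hw₀)
      have hν2 : ν w₀ = 0 := by
        have h := hwind1 w₀ hw₀
        rw [hν]; dsimp only
        calc (∑ k, ∫ t in (0:ℝ)..1, deriv (γ k) t / (γ k t - w₀))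
            = (2 * Real.pi * Complex.I) * ((2 * Real.pi * Complex.I)⁻¹ *
              ∑ k, ∫ t in (0:ℝ)..1, deriv (γ k) t / (γ k t - w₀)) := by
              rw [← mul_assoc, mul_inv_cancel₀ two_pi_I_ne_zero', one_mul]
          _ = 0 := by rw [h, mul_zero]
      have hev := nu_locally_const hγs hγp hcur
      have heq : Φ =ᶠ[𝓝 w₀] H := by
        filter_upwards [hev] with z hz
        obtain ⟨hzc, hzν⟩ := hz
        by_cases hzs : z ∈ specUnb dom L1
        · rw [hΦ]; dsimp only; rw [if_pos hzs]
        · rw [hΦ]; dsimp only; rw [if_neg hzs]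
          have hovz := hover z hzs hzc
          have hνz : ν z = 0 := by rw [hν]; dsimp only; rw [hzν]; exact hν2
          rw [hovz, hνz, zero_smul, add_zero]
      have hHd : DifferentiableAt ℂ H w₀ :=
        DifferentiableAt.fun_sum (fun k _ =>
          curve_integral_differentiableAt (hγs k) (hrc k) (hcur k))
      exact hHd.congr_of_eventuallyEq heq
    · have hev : ∀ᶠ z in 𝓝 w₀, z ∉ specUnb dom L1 := by
        have hopen : IsOpen {z : ℂ | z ∉ specUnb dom L1} := specUnb_isOpen_compl
        exact hopen.eventually_mem hw₀
      have heq : Φ =ᶠ[𝓝 w₀] fun z => J * r z := by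
        filter_upwards [hev] with z hz
        rw [hΦ]; dsimp only; rw [if_neg hz]
      exact (((differentiableAt_const _).mul (r1f_differentiableAt hw₀))).congr_of_eventuallyEq heq
  have hΦtend : Filter.Tendsto Φ (Bornology.cobounded ℂ) (𝓝 0) := by
    have hHtend : Filter.Tendsto H (Bornology.cobounded ℂ) (𝓝 0) := by
      have := tendsto_finset_sum (Finset.univ : Finset (Fin N))
        (fun k (_ : k ∈ Finset.univ) =>
          curve_integral_tendsto_zero (E := W₁ →L[ℂ] W₁) (hγs k) (hrc k))
      simpa using this
    have hev : H =ᶠ[Bornology.cobounded ℂ] Φ := by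
      filter_upwards [nu_eventually_zero hγs hγp] with z hz
      obtain ⟨hzc, hzν⟩ := hz
      by_cases hzs : z ∈ specUnb dom L1
      · rw [hΦ]; dsimp only; rw [if_pos hzs]
      · rw [hΦ]; dsimp only; rw [if_neg hzs]
        have hovz := hover z hzs hzc
        have hνz : ν z = 0 := hzν
        rw [hovz, hνz, zero_smul, add_zero]
    exact hHtend.congr' hev
  have hΦ0 := liouville_zero hΦdiff hΦtend
  obtain ⟨k₀⟩ := hNe
  set w₁ : ℂ := γ k₀ 0 with hw₁def
  have hw₁ : w₁ ∉ specUnb dom L1 := hres k₀ 0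
  have hzero : J * r w₁ = 0 := by
    have := hΦ0 w₁
    rw [hΦ] at this; dsimp only at this; rwa [if_neg hw₁] at this
  have hdom : ∀ x ∈ (dom : Set W₁), J x = 0 := by
    intro x hx
    have hres1 := r1f_res hw₁
    have hback : r w₁ (L1 ⟨x, hx⟩ - w₁ • x) = x := hres1.2 ⟨x, hx⟩
    calc J x = J (r w₁ (L1 ⟨x, hx⟩ - w₁ • x)) := by rw [hback]
      _ = (J * r w₁) (L1 ⟨x, hx⟩ - w₁ • x) := by rw [ContinuousLinearMap.mul_apply]
      _ = 0 := by rw [hzero]; simp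
  have hJ0 : J = 0 := by
    apply ContinuousLinearMap.ext_on
      (by rwa [Submodule.span_eq] : Dense ((Submodule.span ℂ (dom : Set W₁) : Submodule ℂ W₁) : Set W₁))
    intro x hx
    simp [hdom x hx]
  exact hJ0

end CauchyThms
section Uniqueness

open MeasureTheory Bornology

variable {W₁ W₂ : Type*}
  [NormedAddCommGroup W₁] [InnerProductSpace ℂ W₁] [CompleteSpace W₁]
  [NormedAddCommGroup W₂] [InnerProductSpace ℂ W₂] [CompleteSpace W₂]

theorem sylvester_unique {dom : Submodule ℂ W₁} {L1 : dom →ₗ[ℂ] W₁} {L2 : W₂ →L[ℂ] W₂}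
    (hdisj : specUnb dom L1 ∩ spectrum ℂ L2 = ∅) {M : W₂ →L[ℂ] W₁}
    {S S' : W₂ →L[ℂ] W₁} (hS : IsSylvesterSol dom L1 L2 M S)
    (hS' : IsSylvesterSol dom L1 L2 M S') : S = S' := by
  classical
  set T := S - S' with hT
  have hTapp : ∀ x : W₂, T x = S x - S' x := fun x => rfl
  have hTprop : ∀ x : W₂, ∃ hx : T x ∈ dom, L1 ⟨T x, hx⟩ = T (L2 x) := by
    intro x
    obtain ⟨h1, e1⟩ := hS x
    obtain ⟨h2, e2⟩ := hS' x
    have hx : T x ∈ dom := by rw [hTapp]; exact dom.sub_mem h1 h2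
    refine ⟨hx, ?_⟩
    have hsub : (⟨T x, hx⟩ : dom) = ⟨S x, h1⟩ - ⟨S' x, h2⟩ := by
      apply Subtype.ext
      simp [hTapp]
    rw [hsub, map_sub]
    have e1' : L1 ⟨S x, h1⟩ = M x + S (L2 x) := by rw [← e1]; abel
    have e2' : L1 ⟨S' x, h2⟩ = M x + S' (L2 x) := by rw [← e2]; abel
    rw [e1', e2', hTapp]
    abel
  have hkey : ∀ z, z ∉ specUnb dom L1 → z ∉ spectrum ℂ L2 →
      T ∘L r2f L2 z = -(r1f dom L1 z ∘L T) := by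
    intro z hz1 hz2
    ext x
    set u := r2f L2 z x with hu
    have hux : z • u - L2 u = x := by
      have h0 := congrArg (fun Q : W₂ →L[ℂ] W₂ => Q x) (r2f_mul hz2)
      simpa [ContinuousLinearMap.mul_apply, ContinuousLinearMap.sub_apply,
        ContinuousLinearMap.smul_apply] using h0
    obtain ⟨hmem, heq⟩ := hTprop u
    have h2 := (r1f_res hz1).2 ⟨T u, hmem⟩
    have h3 : L1 ⟨T u, hmem⟩ - z • T u = -(T x) := by
      rw [heq, ← T.map_smul, ← T.map_sub]
      rw [show L2 u - z • u = -x from by rw [← hux]; abel, map_neg]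
    rw [h3, map_neg] at h2
    simp only [ContinuousLinearMap.comp_apply, ContinuousLinearMap.neg_apply]
    exact h2.symm
  have hdisj' : ∀ z, z ∈ spectrum ℂ L2 → z ∉ specUnb dom L1 := by
    intro z hz2 hz1
    have : z ∈ specUnb dom L1 ∩ spectrum ℂ L2 := ⟨hz1, hz2⟩
    rw [hdisj] at this
    exact this
  set A : ℂ → (W₂ →L[ℂ] W₁) :=
    fun z => if z ∈ spectrum ℂ L2 then -(r1f dom L1 z ∘L T) else T ∘L r2f L2 z with hA
  have hAdiff : Differentiable ℂ A := by
    intro w₀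
    by_cases hw₀ : w₀ ∈ spectrum ℂ L2
    · have hw₁ : w₀ ∉ specUnb dom L1 := hdisj' w₀ hw₀
      have hev : ∀ᶠ z in 𝓝 w₀, z ∉ specUnb dom L1 := specUnb_isOpen_compl.eventually_mem hw₁
      have heq : A =ᶠ[𝓝 w₀] fun z => -(r1f dom L1 z ∘L T) := by
        filter_upwards [hev] with z hz
        by_cases hz2 : z ∈ spectrum ℂ L2
        · rw [hA]; dsimp only; rw [if_pos hz2]
        · rw [hA]; dsimp only; rw [if_neg hz2]; exact hkey z hz hz2
      have hd : DifferentiableAt ℂ (fun z => -(r1f dom L1 z ∘L T)) w₀ := by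
        have hL : DifferentiableAt ℂ
            (fun z => ((ContinuousLinearMap.compL ℂ W₂ W₁ W₁).flip T) (r1f dom L1 z)) w₀ :=
          (((ContinuousLinearMap.compL ℂ W₂ W₁ W₁).flip T).differentiableAt).comp w₀
            (r1f_differentiableAt hw₁)
        have : (fun z => ((ContinuousLinearMap.compL ℂ W₂ W₁ W₁).flip T) (r1f dom L1 z))
            = fun z => r1f dom L1 z ∘L T := by
          ext z x
          simp
        rw [this] at hL
        exact hL.neg
      exact hd.congr_of_eventuallyEq heq
    · have hev : ∀ᶠ z in 𝓝 w₀, z ∉ spectrum ℂ L2 :=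
        (spectrum.isClosed L2).isOpen_compl.eventually_mem hw₀
      have heq : A =ᶠ[𝓝 w₀] fun z => T ∘L r2f L2 z := by
        filter_upwards [hev] with z hz
        rw [hA]; dsimp only; rw [if_neg hz]
      have hd : DifferentiableAt ℂ (fun z => T ∘L r2f L2 z) w₀ := by
        have hL : DifferentiableAt ℂ
            (fun z => (ContinuousLinearMap.compL ℂ W₂ W₂ W₁ T) (r2f L2 z)) w₀ :=
          ((ContinuousLinearMap.compL ℂ W₂ W₂ W₁ T).differentiableAt).comp w₀
            (r2f_differentiableAt hw₀)
        have : (fun z => (ContinuousLinearMap.compL ℂ W₂ W₂ W₁ T) (r2f L2 z))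
            = fun z => T ∘L r2f L2 z := by
          ext z x
          simp
        rw [this] at hL
        exact hL
      exact hd.congr_of_eventuallyEq heq
  have hAtend : Filter.Tendsto A (Bornology.cobounded ℂ) (𝓝 0) := by
    have hg : Filter.Tendsto (fun z => T ∘L r2f L2 z) (Bornology.cobounded ℂ) (𝓝 0) := by
      have h0 := ((ContinuousLinearMap.compL ℂ W₂ W₂ W₁ T).continuous.tendsto 0).comp
        (r2f_tendsto_zero L2)
      have h1 : (ContinuousLinearMap.compL ℂ W₂ W₂ W₁ T) 0 = 0 := by simp
      rw [h1] at h0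
      apply h0.congr
      intro z
      simp [Function.comp]
    have hev : (fun z => T ∘L r2f L2 z) =ᶠ[Bornology.cobounded ℂ] A := by
      filter_upwards [eventually_cobounded_le_norm (‖L2‖ + 1)] with z hz
      have hzs : z ∉ spectrum ℂ L2 := not_spec_of_norm_lt L2 (by linarith)
      rw [hA]; dsimp only; rw [if_neg hzs]
    exact hg.congr' hev
  have hA0 := liouville_zero hAdiff hAtend
  set z₀ : ℂ := ((‖L2‖ + 1 : ℝ) : ℂ) with hz₀def
  have hz₀n : ‖z₀‖ = ‖L2‖ + 1 := by
    rw [hz₀def, Complex.norm_real, Real.norm_eq_abs, abs_of_pos (by positivity)]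
  have hz₀s : z₀ ∉ spectrum ℂ L2 := not_spec_of_norm_lt L2 (by rw [hz₀n]; linarith)
  have h1 : T ∘L r2f L2 z₀ = 0 := by
    have := hA0 z₀
    rw [hA] at this; dsimp only at this; rwa [if_neg hz₀s] at this
  have hT0 : T = 0 := by
    have h2 : r2f L2 z₀ ∘L (z₀ • (1 : W₂ →L[ℂ] W₂) - L2) = 1 := by
      rw [← ContinuousLinearMap.mul_def]
      exact r2f_mul' hz₀s
    calc T = T ∘L (r2f L2 z₀ ∘L (z₀ • (1 : W₂ →L[ℂ] W₂) - L2)) := by rw [h2]; rfl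
      _ = (T ∘L r2f L2 z₀) ∘L (z₀ • (1 : W₂ →L[ℂ] W₂) - L2) := by
          rw [ContinuousLinearMap.comp_assoc]
      _ = 0 := by rw [h1]; simp
  have := sub_eq_zero.mp (hT0 : S - S' = 0)
  exact this

end Uniqueness
section Existence

open MeasureTheory Bornology

variable {W₁ W₂ : Type*}
  [NormedAddCommGroup W₁] [InnerProductSpace ℂ W₁] [CompleteSpace W₁]
  [NormedAddCommGroup W₂] [InnerProductSpace ℂ W₂] [CompleteSpace W₂]

theorem sylvester_sol_integral {dom : Submodule ℂ W₁} {L1 : dom →ₗ[ℂ] W₁}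
    (hclosed : IsClosedOp dom L1) (hdense : Dense (dom : Set W₁)) {L2 : W₂ →L[ℂ] W₂}
    {N : ℕ} {γ : Fin N → ℝ → ℂ} (hγs : ∀ k, ContDiff ℝ 1 (γ k))
    (hγp : ∀ k t, γ k (t + 1) = γ k t)
    (hres1 : ∀ k t, γ k t ∉ specUnb dom L1)
    (hres2 : ∀ k t, γ k t ∉ spectrum ℂ L2)
    (hwind2 : ∀ z ∈ spectrum ℂ L2,
      (2 * Real.pi * Complex.I)⁻¹ * ∑ k, ∫ t in (0:ℝ)..1, deriv (γ k) t / (γ k t - z) = 1)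
    (hwind1 : ∀ z ∈ specUnb dom L1,
      (2 * Real.pi * Complex.I)⁻¹ * ∑ k, ∫ t in (0:ℝ)..1, deriv (γ k) t / (γ k t - z) = 0)
    (M : W₂ →L[ℂ] W₁) :
    IsSylvesterSol dom L1 L2 M ((2 * Real.pi * Complex.I)⁻¹ •
      ∑ k, ∫ t in (0:ℝ)..1,
        deriv (γ k) t • (r1f dom L1 (γ k t) ∘L M ∘L r2f L2 (γ k t))) := by
  classical
  set c2 : ℂ := 2 * Real.pi * Complex.I with hc2
  set r1 := r1f dom L1 with hr1def
  set r2 := r2f L2 with hr2def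
  have hγ' : ∀ k, Continuous (deriv (γ k)) := fun k => (hγs k).continuous_deriv le_rfl
  have hr1c : ∀ k, Continuous fun t => r1 (γ k t) := fun k =>
    continuous_iff_continuousAt.mpr fun t =>
      ((r1f_differentiableAt (hres1 k t)).continuousAt).comp ((hγs k).continuous.continuousAt)
  have hr2c : ∀ k, Continuous fun t => r2 (γ k t) := fun k =>
    continuous_iff_continuousAt.mpr fun t =>
      ((r2f_differentiableAt (hres2 k t)).continuousAt).comp ((hγs k).continuous.continuousAt)
  have hopc : ∀ k, Continuous fun t => deriv (γ k) t • (r1 (γ k t) ∘L M ∘L r2 (γ k t)) :=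
    fun k => (hγ' k).smul (((hr1c k).clm_comp continuous_const).clm_comp (hr2c k))
  have hopint : ∀ k, IntervalIntegrable
      (fun t => deriv (γ k) t • (r1 (γ k t) ∘L M ∘L r2 (γ k t))) volume 0 1 :=
    fun k => (hopc k).intervalIntegrable _ _
  have hr1int : ∀ k, IntervalIntegrable (fun t => deriv (γ k) t • r1 (γ k t)) volume 0 1 :=
    fun k => ((hγ' k).smul (hr1c k)).intervalIntegrable _ _
  have hr2int : ∀ k, IntervalIntegrable (fun t => deriv (γ k) t • r2 (γ k t)) volume 0 1 :=
    fun k => ((hγ' k).smul (hr2c k)).intervalIntegrable _ _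
  have hJ1 := cauchy_unbounded hdense hγs hγp hres1 hwind1
  have hJ2 := cauchy_bounded L2 hγs hγp hres2 hwind2
  have hv1 : ∀ v : W₁, (∑ k, ∫ t in (0:ℝ)..1, deriv (γ k) t • (r1 (γ k t) v)) = 0 := by
    intro v
    have h0 := congrArg (fun Q : W₁ →L[ℂ] W₁ => Q v) hJ1
    simp only [ContinuousLinearMap.zero_apply] at h0
    rw [← h0]
    rw [ContinuousLinearMap.sum_apply]
    refine Finset.sum_congr rfl fun k _ => ?_
    rw [ContinuousLinearMap.intervalIntegral_apply (hr1int k) v]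
    apply intervalIntegral.integral_congr
    intro t _
    simp
  have hv2 : ∀ v : W₂, (∑ k, ∫ t in (0:ℝ)..1, deriv (γ k) t • (r2 (γ k t) v)) = c2 • v := by
    intro v
    have h0 := congrArg (fun Q : W₂ →L[ℂ] W₂ => Q v) hJ2
    simp only [ContinuousLinearMap.smul_apply, ContinuousLinearMap.one_apply] at h0
    rw [← h0]
    rw [ContinuousLinearMap.sum_apply]
    refine Finset.sum_congr rfl fun k _ => ?_
    rw [ContinuousLinearMap.intervalIntegral_apply (hr2int k) v]
    apply intervalIntegral.integral_congr
    intro t _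
    simp
  intro x
  set vx : Fin N → ℝ → W₁ := fun k t => M (r2 (γ k t) x) with hvx
  set fx : Fin N → ℝ → W₁ := fun k t => r1 (γ k t) (vx k t) with hfx
  set gx : Fin N → ℝ → W₁ := fun k t => vx k t + γ k t • fx k t with hgx
  have hvxc : ∀ k, Continuous (vx k) := fun k =>
    M.continuous.comp ((hr2c k).clm_apply continuous_const)
  have hfxc : ∀ k, Continuous (fx k) := fun k => (hr1c k).clm_apply (hvxc k)
  have hgxc : ∀ k, Continuous (gx k) := fun k =>
    (hvxc k).add ((hγs k).continuous.smul (hfxc k))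
  have hfxmem : ∀ k t, fx k t ∈ dom := fun k t =>
    res_apply_mem (r1f_res (hres1 k t)) (vx k t)
  -- value of S₀ at a point
  have happly : ∀ y : W₂, ((2 * Real.pi * Complex.I)⁻¹ •
      ∑ k, ∫ t in (0:ℝ)..1, deriv (γ k) t • (r1 (γ k t) ∘L M ∘L r2 (γ k t))) y
      = c2⁻¹ • ∑ k, ∫ t in (0:ℝ)..1, deriv (γ k) t • (r1 (γ k t) (M (r2 (γ k t) y))) := by
    intro y
    rw [ContinuousLinearMap.smul_apply, ContinuousLinearMap.sum_apply, ← hc2]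
    congr 1
    refine Finset.sum_congr rfl fun k _ => ?_
    rw [ContinuousLinearMap.intervalIntegral_apply (hopint k) y]
    apply intervalIntegral.integral_congr
    intro t _
    simp
  -- closed graph step
  have hCG : ∀ k, ∃ h : (∫ t in (0:ℝ)..1, deriv (γ k) t • fx k t) ∈ dom,
      L1 ⟨∫ t in (0:ℝ)..1, deriv (γ k) t • fx k t, h⟩
        = ∫ t in (0:ℝ)..1, deriv (γ k) t • gx k t := by
    intro k
    apply closedOp_integral hclosed ((hγ' k).smul (hfxc k)) ((hγ' k).smul (hgxc k))
    intro t
    have hmem : deriv (γ k) t • fx k t ∈ dom := dom.smul_mem _ (hfxmem k t)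
    refine ⟨hmem, ?_⟩
    have hsubty : (⟨deriv (γ k) t • fx k t, hmem⟩ : dom)
        = deriv (γ k) t • ⟨fx k t, hfxmem k t⟩ := by
      apply Subtype.ext
      simp
    show L1 ⟨deriv (γ k) t • fx k t, hmem⟩ = deriv (γ k) t • gx k t
    rw [hsubty, _root_.map_smul]
    have := res_eq (r1f_res (hres1 k t)) (vx k t) (hfxmem k t)
    rw [hgx]
    dsimp only
    rw [this]
  have hmemk : ∀ k, (∫ t in (0:ℝ)..1, deriv (γ k) t • fx k t) ∈ dom :=
    fun k => (hCG k).choose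
  have hvalk : ∀ k, L1 ⟨∫ t in (0:ℝ)..1, deriv (γ k) t • fx k t, hmemk k⟩
      = ∫ t in (0:ℝ)..1, deriv (γ k) t • gx k t := fun k => (hCG k).choose_spec
  have hSx := happly x
  have hmemS : ((2 * Real.pi * Complex.I)⁻¹ •
      ∑ k, ∫ t in (0:ℝ)..1, deriv (γ k) t • (r1 (γ k t) ∘L M ∘L r2 (γ k t))) x ∈ dom := by
    rw [hSx]
    exact dom.smul_mem _ (Submodule.sum_mem _ (fun k _ => hmemk k))
  refine ⟨hmemS, ?_⟩
  have hLS : L1 ⟨_, hmemS⟩ = c2⁻¹ • ∑ k, ∫ t in (0:ℝ)..1, deriv (γ k) t • gx k t := by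
    have hsubty : (⟨_, hmemS⟩ : dom)
        = c2⁻¹ • ∑ k, (⟨∫ t in (0:ℝ)..1, deriv (γ k) t • fx k t, hmemk k⟩ : dom) := by
      have hcoe : ((⟨_, hmemS⟩ : dom) : W₁) = ((2 * Real.pi * Complex.I)⁻¹ •
          ∑ k, ∫ t in (0:ℝ)..1,
            deriv (γ k) t • (r1 (γ k t) ∘L M ∘L r2 (γ k t))) x := rfl
      apply Subtype.ext
      rw [hcoe, hSx]
      push_cast
      rfl
    rw [hsubty, _root_.map_smul, map_sum]
    congr 1
    exact Finset.sum_congr rfl fun k _ => hvalk k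
  -- value at L2 x
  have hr2L2 : ∀ k t, r2 (γ k t) (L2 x) = γ k t • (r2 (γ k t) x) - x := by
    intro k t
    have h0 := congrArg (fun Q : W₂ →L[ℂ] W₂ => Q x) (r2f_mul' (hres2 k t))
    simp only [ContinuousLinearMap.mul_apply, ContinuousLinearMap.sub_apply,
      ContinuousLinearMap.smul_apply, ContinuousLinearMap.one_apply] at h0
    rw [map_sub, (r2 (γ k t)).map_smul] at h0
    have h1 : γ k t • r2 (γ k t) x = x + r2 (γ k t) (L2 x) := eq_add_of_sub_eq h0
    rw [h1]
    abel
  have hSL2 : ((2 * Real.pi * Complex.I)⁻¹ •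
      ∑ k, ∫ t in (0:ℝ)..1, deriv (γ k) t • (r1 (γ k t) ∘L M ∘L r2 (γ k t))) (L2 x)
      = c2⁻¹ • ∑ k, ∫ t in (0:ℝ)..1,
          deriv (γ k) t • (γ k t • fx k t - r1 (γ k t) (M x)) := by
    rw [happly (L2 x)]
    congr 1
    refine Finset.sum_congr rfl fun k _ => ?_
    apply intervalIntegral.integral_congr
    intro t _
    dsimp only
    congr 1
    rw [hr2L2 k t, M.map_sub, M.map_smul, (r1 (γ k t)).map_sub, (r1 (γ k t)).map_smul]
  rw [hLS, hSL2, ← smul_sub, ← Finset.sum_sub_distrib]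
  have hterm : ∀ k, ((∫ t in (0:ℝ)..1, deriv (γ k) t • gx k t)
      - ∫ t in (0:ℝ)..1, deriv (γ k) t • (γ k t • fx k t - r1 (γ k t) (M x)))
      = (∫ t in (0:ℝ)..1, deriv (γ k) t • vx k t)
        + ∫ t in (0:ℝ)..1, deriv (γ k) t • (r1 (γ k t) (M x)) := by
    intro k
    have hi1 : IntervalIntegrable (fun t => deriv (γ k) t • gx k t) volume 0 1 :=
      ((hγ' k).smul (hgxc k)).intervalIntegrable _ _
    have hi2 : IntervalIntegrable
        (fun t => deriv (γ k) t • (γ k t • fx k t - r1 (γ k t) (M x))) volume 0 1 :=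
      ((hγ' k).smul (((hγs k).continuous.smul (hfxc k)).sub
        ((hr1c k).clm_apply continuous_const))).intervalIntegrable _ _
    have hi3 : IntervalIntegrable (fun t => deriv (γ k) t • vx k t) volume 0 1 :=
      ((hγ' k).smul (hvxc k)).intervalIntegrable _ _
    have hi4 : IntervalIntegrable (fun t => deriv (γ k) t • (r1 (γ k t) (M x))) volume 0 1 :=
      ((hγ' k).smul ((hr1c k).clm_apply continuous_const)).intervalIntegrable _ _
    rw [← intervalIntegral.integral_sub hi1 hi2, ← intervalIntegral.integral_add hi3 hi4]
    apply intervalIntegral.integral_congr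
    intro t _
    rw [hgx]
    dsimp only
    rw [← smul_add, ← smul_sub]
    congr 1
    abel
  rw [Finset.sum_congr rfl (fun k _ => hterm k), Finset.sum_add_distrib]
  have hfirst : (∑ k, ∫ t in (0:ℝ)..1, deriv (γ k) t • vx k t) = c2 • M x := by
    have hstep : ∀ k, (∫ t in (0:ℝ)..1, deriv (γ k) t • vx k t)
        = M (∫ t in (0:ℝ)..1, deriv (γ k) t • (r2 (γ k t) x)) := by
      intro k
      have hint : IntervalIntegrable (fun t => deriv (γ k) t • (r2 (γ k t) x)) volume 0 1 :=
        ((hγ' k).smul ((hr2c k).clm_apply continuous_const)).intervalIntegrable _ _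
      rw [← M.intervalIntegral_comp_comm hint]
      apply intervalIntegral.integral_congr
      intro t _
      rw [hvx]
      dsimp only
      rw [M.map_smul]
    rw [Finset.sum_congr rfl (fun k _ => hstep k), ← map_sum, hv2 x, M.map_smul]
  rw [hfirst, hv1 (M x), add_zero, smul_smul, inv_mul_cancel₀ two_pi_I_ne_zero', one_smul]

end Existence
/-- Lemma `sepbnd`, part (a): if `σ(L₁) ∩ σ(L₂) = ∅` then for every
bounded `M : W₂ → W₁` the Sylvester equation `L₁S - SL₂ = M` has a unique bounded
solution `S : W₂ → Dom(L₁)`, and `S` is represented by the Dunford contour integral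
`S = (2πi)⁻¹ ∮_{Γ₂} (L₁ - z)⁻¹ M (z - L₂)⁻¹ dz`, where `Γ₂` is a finite system of closed
rectifiable (here: `C¹`, `1`-periodic) Jordan curves winding once around every point of
`σ(L₂)` and zero times around every point of `σ(L₁)`. -/
theorem stmt17 {W₁ W₂ : Type*}
    [NormedAddCommGroup W₁] [InnerProductSpace ℂ W₁] [CompleteSpace W₁]
    [NormedAddCommGroup W₂] [InnerProductSpace ℂ W₂] [CompleteSpace W₂]
    -- `L₁` closed and densely defined on `W₁`; `L₂` bounded on `W₂`
    (dom : Submodule ℂ W₁) (L1 : dom →ₗ[ℂ] W₁)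
    (hclosed : IsClosedOp dom L1) (hdense : Dense (dom : Set W₁))
    (L2 : W₂ →L[ℂ] W₂)
    -- disjoint spectra
    (hdisj : specUnb dom L1 ∩ spectrum ℂ L2 = ∅)
    -- the contour `Γ₂`: finitely many closed `C¹` curves `γ k`, `1`-periodic,
    -- winding once around `σ(L₂)` and zero times around `σ(L₁)`, and along which both
    -- resolvents `R1 k t = (L₁ - γ k t)⁻¹` and `R2 k t = (γ k t - L₂)⁻¹` exist
    (N : ℕ) (γ : Fin N → ℝ → ℂ)
    (hγ_smooth : ∀ k, ContDiff ℝ 1 (γ k))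
    (hγ_per : ∀ k t, γ k (t + 1) = γ k t)
    (R1 : Fin N → ℝ → W₁ →L[ℂ] W₁)
    (hR1 : ∀ k t, IsResolventAt dom L1 (γ k t) (R1 k t))
    (R2 : Fin N → ℝ → W₂ →L[ℂ] W₂)
    (hR2 : ∀ k t, (γ k t • (1 : W₂ →L[ℂ] W₂) - L2) ∘L R2 k t = 1 ∧
      R2 k t ∘L (γ k t • (1 : W₂ →L[ℂ] W₂) - L2) = 1)
    (hwind2 : ∀ z ∈ spectrum ℂ L2,
      (2 * Real.pi * Complex.I)⁻¹ *
        ∑ k, ∫ t in (0 : ℝ)..1, deriv (γ k) t / (γ k t - z) = 1)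
    (hwind1 : ∀ z ∈ specUnb dom L1,
      (2 * Real.pi * Complex.I)⁻¹ *
        ∑ k, ∫ t in (0 : ℝ)..1, deriv (γ k) t / (γ k t - z) = 0)
    (M : W₂ →L[ℂ] W₁) :
    (∃! S : W₂ →L[ℂ] W₁, IsSylvesterSol dom L1 L2 M S) ∧
    ∀ S : W₂ →L[ℂ] W₁, IsSylvesterSol dom L1 L2 M S →
      S = (2 * Real.pi * Complex.I)⁻¹ •
        ∑ k, ∫ t in (0 : ℝ)..1, deriv (γ k) t • ((R1 k t) ∘L M ∘L (R2 k t)) := by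
  classical
  have hres1 : ∀ k t, γ k t ∉ specUnb dom L1 := fun k t => not_specUnb_of_res (hR1 k t)
  have hres2 : ∀ k t, γ k t ∉ spectrum ℂ L2 := fun k t =>
    not_spec_of_inv (hR2 k t).1 (hR2 k t).2
  have hr1γ : ∀ k t, R1 k t = r1f dom L1 (γ k t) := fun k t => (r1f_eq (hR1 k t)).symm
  have hr2γ : ∀ k t, R2 k t = r2f L2 (γ k t) := fun k t =>
    (r2f_of_inv (hR2 k t).1 (hR2 k t).2).symm
  have hRHSeq : ((2 * Real.pi * Complex.I)⁻¹ •
      ∑ k, ∫ t in (0 : ℝ)..1, deriv (γ k) t • ((R1 k t) ∘L M ∘L (R2 k t)))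
      = ((2 * Real.pi * Complex.I)⁻¹ •
      ∑ k, ∫ t in (0 : ℝ)..1,
        deriv (γ k) t • (r1f dom L1 (γ k t) ∘L M ∘L r2f L2 (γ k t))) := by
    congr 1
    refine Finset.sum_congr rfl fun k _ => ?_
    apply intervalIntegral.integral_congr
    intro t _
    dsimp only
    rw [hr1γ k t, hr2γ k t]
  have hsol : IsSylvesterSol dom L1 L2 M ((2 * Real.pi * Complex.I)⁻¹ •
      ∑ k, ∫ t in (0 : ℝ)..1, deriv (γ k) t • ((R1 k t) ∘L M ∘L (R2 k t))) := by
    rw [hRHSeq]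
    exact sylvester_sol_integral hclosed hdense hγ_smooth hγ_per hres1 hres2 hwind2 hwind1 M
  exact ⟨⟨_, hsol, fun S hS => sylvester_unique hdisj hS hsol⟩,
    fun S hS => sylvester_unique hdisj hS hsol⟩
end
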